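/- arXiv:2211.00740 — 12 statements merged into one kernel-verified Lean document; each statement's English description precedes it below -/
import Mathlib

section
/- Let Φ₁, …, Φ_p be n×n real matrices with Φ = Φ₁ + ⋯ + Φ_p such that Iₙ − Φ is invertible, let M be the np×np companion block matrix whose first block row is (Φ₁ ⋯ Φ_p), whose (k+1, k) block is Iₙ for k = 1, …, p−1, and zero otherwise, let Θ be an n×n matrix, and let Θᵞ be the np×np matrix whose top-left n×n block is Θ and whose other blocks are zero. Then the top-left n×n block of (I_{np} − M)⁻¹ Θᵞ (I_{np} − M)⁻ᵀ equals (Iₙ − Φ)⁻¹ Θ (Iₙ − Φ)⁻ᵀ. -/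
open Matrix

/-- The top-left `n × n` block of `(I_{np} - M)⁻¹ Θᵞ (I_{np} - M)⁻ᵀ` equals
`(Iₙ - Φ)⁻¹ Θ (Iₙ - Φ)⁻ᵀ`, where `M` is the companion block matrix of
`Φ₁, …, Φ_p`, `Φ = Φ₁ + ⋯ + Φ_p`, `Iₙ - Φ` is invertible, and `Θᵞ` has top-left
block `Θ` and zeros elsewhere. -/
theorem companion_integrated_covariance_top_left_block
    {n p : ℕ} (hp : 0 < p)
    (Φ : Fin p → Matrix (Fin n) (Fin n) ℝ)
    (Θ : Matrix (Fin n) (Fin n) ℝ)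
    (M : Matrix (Fin p × Fin n) (Fin p × Fin n) ℝ)
    (hM : ∀ (a b : Fin p) (i j : Fin n),
      M (a, i) (b, j) =
        if (a : ℕ) = 0 then Φ b i j
        else if (a : ℕ) = (b : ℕ) + 1 then (if i = j then 1 else 0) else 0)
    (ΘY : Matrix (Fin p × Fin n) (Fin p × Fin n) ℝ)
    (hΘY : ∀ (a b : Fin p) (i j : Fin n),
      ΘY (a, i) (b, j) = if (a : ℕ) = 0 ∧ (b : ℕ) = 0 then Θ i j else 0)
    (hΦ : IsUnit (1 - ∑ k, Φ k).det) :
    (Matrix.of fun i j : Fin n =>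
        ((1 - M)⁻¹ * ΘY * ((1 - M)⁻¹)ᵀ :
            Matrix (Fin p × Fin n) (Fin p × Fin n) ℝ)
          ((⟨0, hp⟩ : Fin p), i) ((⟨0, hp⟩ : Fin p), j)) =
      (1 - ∑ k, Φ k)⁻¹ * Θ * ((1 - ∑ k, Φ k)⁻¹)ᵀ := by
  classical
  set Φs : Matrix (Fin n) (Fin n) ℝ := ∑ k, Φ k with hΦs
  set A : Matrix (Fin n) (Fin n) ℝ := (1 - Φs)⁻¹ with hAdef
  have hA1 : (1 - Φs) * A = 1 := Matrix.mul_nonsing_inv _ hΦ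
  -- partial sums of the Φ's
  set S : Fin p → Matrix (Fin n) (Fin n) ℝ :=
    fun b => ∑ c ∈ Finset.univ.filter (fun c : Fin p => b ≤ c), Φ c with hSdef
  set T : Fin p → Matrix (Fin n) (Fin n) ℝ :=
    fun b => if (b : ℕ) = 0 then 1 else S b with hTdef
  -- the explicit inverse of `1 - M`
  set N : Matrix (Fin p × Fin n) (Fin p × Fin n) ℝ :=
    Matrix.of fun x y =>
      (A * T y.1) x.2 y.2 +
        (if 1 ≤ (y.1 : ℕ) ∧ (y.1 : ℕ) ≤ (x.1 : ℕ)
          then (1 : Matrix (Fin n) (Fin n) ℝ) x.2 y.2 else 0) with hNdef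
  have hfin0 : ∀ d : Fin p, ((d : ℕ) = 0) ↔ (d = ⟨0, hp⟩) := by
    intro d
    constructor
    · intro h; exact Fin.ext h
    · intro h; subst h; rfl
  have hNinv : (1 - M) * N = 1 := by
    ext ⟨a, i⟩ ⟨b, j⟩
    rw [Matrix.mul_apply, Fintype.sum_prod_type]
    have hsplit :
        (∑ c : Fin p, ∑ k : Fin n, (1 - M) (a, i) (c, k) * N (c, k) (b, j))
          = N (a, i) (b, j)
            - ∑ c : Fin p, ∑ k : Fin n, M (a, i) (c, k) * N (c, k) (b, j) := by
      simp only [Matrix.sub_apply, Matrix.one_apply, sub_mul, ite_mul, one_mul, zero_mul,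
        Finset.sum_sub_distrib]
      congr 1
      simp [Prod.mk.injEq, ite_and, Finset.sum_ite_eq]
    rw [hsplit]
    by_cases ha : (a : ℕ) = 0
    · -- first block row
      have hrow : ∀ c : Fin p,
          (∑ k : Fin n, M (a, i) (c, k) * N (c, k) (b, j))
            = (Φ c * (A * T b)) i j
              + (if 1 ≤ (b : ℕ) ∧ (b : ℕ) ≤ (c : ℕ) then Φ c i j else 0) := by
        intro c
        have hNck : ∀ k : Fin n, N (c, k) (b, j)
            = (A * T b) k j + (if 1 ≤ (b : ℕ) ∧ (b : ℕ) ≤ (c : ℕ)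
                then (1 : Matrix (Fin n) (Fin n) ℝ) k j else 0) := fun k => rfl
        by_cases hbc : 1 ≤ (b : ℕ) ∧ (b : ℕ) ≤ (c : ℕ)
        · simp only [hM, ha, if_true, hNck, if_pos hbc, mul_add, Finset.sum_add_distrib,
            Matrix.mul_apply, Matrix.one_apply, mul_ite, mul_one, mul_zero,
            Finset.sum_ite_eq', Finset.mem_univ]
        · simp only [hM, ha, if_true, hNck, if_neg hbc, mul_zero, add_zero,
            Finset.sum_const_zero, Matrix.mul_apply]
      rw [Finset.sum_congr rfl fun c _ => hrow c, Finset.sum_add_distrib]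
      have h1 : (∑ c : Fin p, (Φ c * (A * T b)) i j) = (Φs * (A * T b)) i j := by
        rw [hΦs, Finset.sum_mul, Matrix.sum_apply]
      have h2 : (∑ c : Fin p, if 1 ≤ (b : ℕ) ∧ (b : ℕ) ≤ (c : ℕ) then Φ c i j else 0)
          = if 1 ≤ (b : ℕ) then S b i j else 0 := by
        by_cases hb : 1 ≤ (b : ℕ)
        · simp only [hb, true_and, if_true, hSdef, Matrix.sum_apply]
          rw [Finset.sum_filter]
          exact Finset.sum_congr rfl fun c _ => by
            by_cases h : b ≤ c
            · simp [h, Fin.le_def.mp h]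
            · simp [h, fun hh => h (Fin.le_def.mpr hh)]
        · simp [hb]
      rw [h1, h2]
      have hN0 : N (a, i) (b, j) = (A * T b) i j := by
        have hcond : ¬(1 ≤ (b : ℕ) ∧ (b : ℕ) ≤ (a : ℕ)) := by omega
        show (A * T b) i j + _ = (A * T b) i j
        rw [if_neg hcond, add_zero]
      rw [hN0, sub_add_eq_sub_sub]
      have key : (A * T b) i j - (Φs * (A * T b)) i j = T b i j := by
        have : (1 - Φs) * (A * T b) = T b := by
          rw [← Matrix.mul_assoc, hA1, Matrix.one_mul]
        calc (A * T b) i j - (Φs * (A * T b)) i j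
            = ((1 - Φs) * (A * T b)) i j := by
              simp [Matrix.sub_mul, Matrix.sub_apply]
          _ = T b i j := by rw [this]
      rw [key]
      by_cases hb : (b : ℕ) = 0
      · have hab : a = b := Fin.ext (by omega)
        have hTb : T b = 1 := by simp [hTdef, hb]
        rw [if_neg (by omega : ¬ (1 : ℕ) ≤ (b : ℕ)), sub_zero, hTb]
        simp [Matrix.one_apply, hab, Prod.ext_iff]
      · have hb1 : 1 ≤ (b : ℕ) := by omega
        have hab : ¬ ((a, i) = ((b : Fin p), j)) := by
          intro h
          have hv : (a : ℕ) = (b : ℕ) :=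
            congrArg (fun x : Fin p × Fin n => (x.1 : ℕ)) h
          omega
        have hTb : T b = S b := by simp [hTdef, hb]
        rw [if_pos hb1, hTb, sub_self, Matrix.one_apply, if_neg hab]
    · -- lower block rows
      have ha1 : 1 ≤ (a : ℕ) := by omega
      set c₀ : Fin p := ⟨(a : ℕ) - 1, by omega⟩ with hc₀
      have hc₀v : (c₀ : ℕ) = (a : ℕ) - 1 := rfl
      have hMrow : ∀ (c : Fin p) (k : Fin n),
          M (a, i) (c, k) = if c = c₀ then (if i = k then 1 else 0) else 0 := by
        intro c k
        rw [hM]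
        simp only [ha, if_false]
        by_cases h : c = c₀
        · subst h
          have hv : (a : ℕ) = (c₀ : ℕ) + 1 := by rw [hc₀v]; omega
          rw [if_pos hv, if_pos rfl]
        · have hv : ¬ (a : ℕ) = (c : ℕ) + 1 := by
            intro hh
            exact h (Fin.ext (by rw [hc₀v]; omega))
          rw [if_neg hv, if_neg h]
      have hsum2 :
          (∑ c : Fin p, ∑ k : Fin n, M (a, i) (c, k) * N (c, k) (b, j))
            = N (c₀, i) (b, j) := by
        simp only [hMrow, ite_mul, zero_mul, one_mul]
        rw [Finset.sum_eq_single c₀]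
        · simp [Finset.sum_ite_eq]
        · intro c _ hc; simp [hc]
        · simp
      rw [hsum2]
      have hexp : N (a, i) (b, j) - N (c₀, i) (b, j)
          = (if 1 ≤ (b : ℕ) ∧ (b : ℕ) ≤ (a : ℕ)
              then (1 : Matrix (Fin n) (Fin n) ℝ) i j else 0)
            - (if 1 ≤ (b : ℕ) ∧ (b : ℕ) ≤ (c₀ : ℕ)
              then (1 : Matrix (Fin n) (Fin n) ℝ) i j else 0) := by
        simp only [hNdef, Matrix.of_apply]
        ring
      rw [hexp]
      by_cases hab : (b : ℕ) = (a : ℕ)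
      · have h1 : 1 ≤ (b : ℕ) ∧ (b : ℕ) ≤ (a : ℕ) := by omega
        have h2 : ¬ (1 ≤ (b : ℕ) ∧ (b : ℕ) ≤ (c₀ : ℕ)) := by rw [hc₀v]; omega
        have habfin : a = b := Fin.ext (by omega)
        rw [if_pos h1, if_neg h2, sub_zero]
        simp [Matrix.one_apply, habfin, Prod.ext_iff]
      · have habfin : ¬ ((a, i) = ((b : Fin p), j)) := by
          intro h
          have hv : (a : ℕ) = (b : ℕ) :=
            congrArg (fun x : Fin p × Fin n => (x.1 : ℕ)) h
          omega
        have heq : (1 ≤ (b : ℕ) ∧ (b : ℕ) ≤ (a : ℕ))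
            ↔ (1 ≤ (b : ℕ) ∧ (b : ℕ) ≤ (c₀ : ℕ)) := by rw [hc₀v]; omega
        by_cases h : 1 ≤ (b : ℕ) ∧ (b : ℕ) ≤ (a : ℕ)
        · rw [if_pos h, if_pos (heq.mp h), sub_self, Matrix.one_apply, if_neg habfin]
        · rw [if_neg h, if_neg (fun hh => h (heq.mpr hh)), sub_self,
            Matrix.one_apply, if_neg habfin]
  have hMinv : (1 - M)⁻¹ = N := Matrix.inv_eq_right_inv hNinv
  have hN00 : ∀ (i l : Fin n), N ((⟨0, hp⟩ : Fin p), i) ((⟨0, hp⟩ : Fin p), l) = A i l := by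
    intro i l
    simp [hNdef, hTdef]
  have hNΘ : ∀ (i : Fin n) (c : Fin p) (k : Fin n),
      (N * ΘY) ((⟨0, hp⟩ : Fin p), i) (c, k)
        = if (c : ℕ) = 0 then (A * Θ) i k else 0 := by
    intro i c k
    rw [Matrix.mul_apply, Fintype.sum_prod_type]
    simp only [hΘY, mul_ite, mul_zero, ite_and]
    by_cases hc : (c : ℕ) = 0
    · simp only [hc, if_true]
      simp only [hfin0]
      rw [Finset.sum_eq_single (⟨0, hp⟩ : Fin p)]
      · rw [Matrix.mul_apply]
        exact Finset.sum_congr rfl fun l _ => by rw [hN00, if_pos rfl]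
      · intro d _ hd; simp [hd]
      · simp
    · simp [hc]
  ext i j
  simp only [Matrix.of_apply, hMinv]
  rw [Matrix.mul_apply, Fintype.sum_prod_type]
  simp only [Matrix.transpose_apply, hNΘ, ite_mul, zero_mul]
  simp only [hfin0]
  rw [Finset.sum_eq_single (⟨0, hp⟩ : Fin p)]
  · rw [Matrix.mul_apply]
    refine Finset.sum_congr rfl fun k _ => ?_
    rw [if_pos rfl, hN00, Matrix.transpose_apply]
  · intro d _ hd; simp [hd]
  · simp
end

section
/- Let Φ and Θ be n×n real matrices such that Iₙ − Φ is invertible, and let D be an invertible diagonal n×n matrix. Define Φ̄ = Iₙ − D(Iₙ − Φ) and Θ̄ = D Θ D. Then Iₙ − Φ̄ is invertible and (Iₙ − Φ)⁻¹ Θ (Iₙ − Φ)⁻ᵀ = (Iₙ − Φ̄)⁻¹ Θ̄ (Iₙ − Φ̄)⁻ᵀ. -/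
open Matrix

/-- Rescaling a pair `(Φ, Θ)` solving the integrated covariance equation by an
invertible diagonal matrix `D` produces another pair `(Φ̄, Θ̄)` solving the same
integrated covariance equation. -/
theorem normalization_preserves_integrated_covariance
    {n : ℕ} (Φ Θ D : Matrix (Fin n) (Fin n) ℝ)
    (hΦ : IsUnit (1 - Φ).det)
    (hD : D.IsDiag) (hDunit : IsUnit D.det)
    (Φbar Θbar : Matrix (Fin n) (Fin n) ℝ)
    (hΦbar : Φbar = 1 - D * (1 - Φ))
    (hΘbar : Θbar = D * Θ * D) :
    IsUnit (1 - Φbar).det ∧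
      (1 - Φ)⁻¹ * Θ * ((1 - Φ)⁻¹)ᵀ = (1 - Φbar)⁻¹ * Θbar * ((1 - Φbar)⁻¹)ᵀ := by
  have key : 1 - Φbar = D * (1 - Φ) := by rw [hΦbar, sub_sub_cancel]
  have hdet : IsUnit (1 - Φbar).det := by
    rw [key, Matrix.det_mul]; exact hDunit.mul hΦ
  refine ⟨hdet, ?_⟩
  have hinv : (1 - Φbar)⁻¹ = (1 - Φ)⁻¹ * D⁻¹ := by
    rw [key, Matrix.mul_inv_rev]
  have hDsymm : Dᵀ = D := hD.isSymm
  rw [hinv, hΘbar, Matrix.transpose_mul]; simp only [Matrix.transpose_nonsing_inv]; rw [hDsymm]; symm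
  have hDinv : D⁻¹ * D = 1 := Matrix.nonsing_inv_mul D hDunit
  calc (1 - Φ)⁻¹ * D⁻¹ * (D * Θ * D) * (D⁻¹ * (1 - Φ)ᵀ⁻¹)
      = (1 - Φ)⁻¹ * ((D⁻¹ * D) * Θ * (D * D⁻¹)) * (1 - Φ)ᵀ⁻¹ := by
        simp only [Matrix.mul_assoc]
    _ = (1 - Φ)⁻¹ * Θ * (1 - Φ)ᵀ⁻¹ := by
        rw [hDinv, Matrix.mul_nonsing_inv D hDunit, Matrix.one_mul, Matrix.mul_one]
end

section
/- Let Φ be an n×n real matrix with nonnegative entries such that every complex eigenvalue of Φ has modulus strictly less than 1, and let D be a diagonal n×n matrix with 0 < Dᵢᵢ < 1 for all i. Then the matrix Φ̄ = Iₙ − D + DΦ has nonnegative entries and every complex eigenvalue of Φ̄ has modulus strictly less than 1. -/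
/-!
If `Φ̄ v = z v` with `v ≠ 0` and `‖z‖ ≥ 1`, row `i` reads `(z - (1 - dᵢ)) vᵢ = dᵢ (Φ v)ᵢ`, and
`‖z - (1 - dᵢ)‖ ≥ dᵢ ‖z‖ ≥ dᵢ`, so `w = |v|` satisfies `w ≤ Φ w`. Since `Φ ≥ 0` this iterates to
`w ≤ Φᵏ w`, while `Φᵏ → 0` by Gelfand's formula because `ρ(Φ) < 1`; hence `w = 0`.
-/

open Matrix Filter Topology

theorem tendsto_pow_atTop_nhds_zero_of_spectralRadius_lt_one {A : Type*} [NormedRing A]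
    [NormedAlgebra ℂ A] [CompleteSpace A] {a : A} (ha : spectralRadius ℂ a < 1) :
    Tendsto (a ^ ·) atTop (𝓝 0) := by
  obtain ⟨r, hρr, hr1⟩ := ENNReal.lt_iff_exists_nnreal_btwn.mp ha
  have hr1 : r < 1 := mod_cast hr1
  have hbound : ∀ᶠ n : ℕ in atTop, ‖a ^ n‖ ≤ r ^ n := by
    filter_upwards [(spectrum.pow_nnnorm_pow_one_div_tendsto_nhds_spectralRadius a).eventually_lt_const
      hρr, eventually_ne_atTop 0] with n hn hn0
    rw [← ENNReal.coe_rpow_of_nonneg _ (by positivity), ENNReal.coe_lt_coe, one_div,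
      NNReal.rpow_inv_lt_iff (by positivity), NNReal.rpow_natCast] at hn
    exact_mod_cast hn.le
  exact squeeze_zero_norm' hbound (tendsto_pow_atTop_nhds_zero_of_lt_one r.2 hr1)

theorem Complex.mul_norm_le_norm_sub_ofReal_one_sub {d : ℝ} (hd : d ≤ 1) {z : ℂ} (hz : 1 ≤ ‖z‖) :
    d * ‖z‖ ≤ ‖z - ((1 - d : ℝ) : ℂ)‖ := by
  have h1d : ‖((1 - d : ℝ) : ℂ)‖ = 1 - d := by
    rw [Complex.norm_real, Real.norm_of_nonneg (sub_nonneg.mpr hd)]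
  calc d * ‖z‖ ≤ ‖z‖ - (1 - d) := by nlinarith
    _ = ‖z‖ - ‖((1 - d : ℝ) : ℂ)‖ := by rw [h1d]
    _ ≤ ‖z - ((1 - d : ℝ) : ℂ)‖ := norm_sub_norm_le _ _

namespace Matrix

variable {ι : Type*} [Fintype ι]

theorem norm_mulVec_map_ofReal_le {Φ : Matrix ι ι ℝ} (hΦ : ∀ i j, 0 ≤ Φ i j) (v : ι → ℂ)
    (i : ι) : ‖(Φ.map (fun x : ℝ => (x : ℂ)) *ᵥ v) i‖ ≤ (Φ *ᵥ fun j => ‖v j‖) i := by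
  simp only [mulVec, dotProduct, map_apply]
  refine (norm_sum_le _ _).trans_eq (Finset.sum_congr rfl fun j _ => ?_)
  rw [norm_mul, Complex.norm_real, Real.norm_of_nonneg (hΦ i j)]

variable [DecidableEq ι]

theorem exists_mulVec_eq_smul_of_isRoot_charpoly {K : Type*} [Field K] {A : Matrix ι ι K}
    {z : K} (hz : A.charpoly.IsRoot z) : ∃ v ≠ 0, A *ᵥ v = z • v := by
  rw [← charpoly_toLin', ← Module.End.hasEigenvalue_iff_isRoot_charpoly] at hz
  obtain ⟨v, hv, hv0⟩ := hz.exists_hasEigenvector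
  exact ⟨v, hv0, by simpa using Module.End.mem_eigenspace_iff.mp hv⟩

section LinftyOpNorm

attribute [local instance] Matrix.linftyOpNormedRing Matrix.linftyOpNormedAlgebra

theorem tendsto_pow_atTop_nhds_zero_of_isRoot_charpoly_norm_lt_one {A : Matrix ι ι ℂ}
    (hA : ∀ z : ℂ, A.charpoly.IsRoot z → ‖z‖ < 1) : Tendsto (A ^ ·) atTop (𝓝 0) := by
  cases isEmpty_or_nonempty ι
  · exact tendsto_const_nhds.congr fun _ => Subsingleton.elim _ _
  refine tendsto_pow_atTop_nhds_zero_of_spectralRadius_lt_one ?_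
  refine ENNReal.coe_one ▸ spectrum.spectralRadius_lt_of_forall_lt A fun z hz => ?_
  exact_mod_cast hA z (mem_spectrum_iff_isRoot_charpoly.mp hz)

end LinftyOpNorm

theorem tendsto_pow_atTop_nhds_zero_of_isRoot_charpoly_map_ofReal {Φ : Matrix ι ι ℝ}
    (hΦ : ∀ z : ℂ, (Φ.map (fun x : ℝ => (x : ℂ))).charpoly.IsRoot z → ‖z‖ < 1) :
    Tendsto (Φ ^ ·) atTop (𝓝 0) := by
  have hre : Continuous fun M : Matrix ι ι ℂ => M.map Complex.re :=
    continuous_id.matrix_map Complex.continuous_re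
  have := (hre.tendsto 0).comp (tendsto_pow_atTop_nhds_zero_of_isRoot_charpoly_norm_lt_one hΦ)
  refine (this.congr fun n => ?_).trans (by simp)
  change ((Complex.ofRealHom.mapMatrix Φ) ^ n).map Complex.re = Φ ^ n
  rw [← map_pow]
  ext i j
  simp

theorem le_zero_of_le_mulVec_of_tendsto_pow {Φ : Matrix ι ι ℝ} (hΦ : ∀ i j, 0 ≤ Φ i j)
    (hpow : Tendsto (Φ ^ ·) atTop (𝓝 0)) {w : ι → ℝ} (hw : w ≤ Φ *ᵥ w) : w ≤ 0 := by
  have hle : ∀ k : ℕ, w ≤ Φ ^ k *ᵥ w := by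
    intro k
    induction k with
    | zero => simp
    | succ k ih =>
      rw [pow_succ', ← mulVec_mulVec]
      exact hw.trans fun i => dotProduct_le_dotProduct_of_nonneg_left ih (hΦ i)
  have hlim : Tendsto (fun k : ℕ => Φ ^ k *ᵥ w) atTop (𝓝 0) :=
    ((continuous_id.matrix_mulVec continuous_const).tendsto' 0 0 (zero_mulVec w)).comp hpow
  exact ge_of_tendsto' hlim hle

theorem one_sub_diagonal_add_diagonal_mul (d : ι → ℝ) (Φ : Matrix ι ι ℝ) :
    1 - diagonal d + diagonal d * Φ = diagonal (1 - d) + diagonal d * Φ := by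
  rw [← diagonal_one, diagonal_sub]
  rfl

theorem diagonal_one_sub_add_diagonal_mul_nonneg {d : ι → ℝ} (hd0 : ∀ i, 0 ≤ d i)
    (hd1 : ∀ i, d i ≤ 1) {Φ : Matrix ι ι ℝ} (hΦ : ∀ i j, 0 ≤ Φ i j) (i j : ι) :
    0 ≤ (diagonal (1 - d) + diagonal d * Φ : Matrix ι ι ℝ) i j := by
  rw [add_apply, diagonal_mul, diagonal_apply]
  refine add_nonneg ?_ (mul_nonneg (hd0 i) (hΦ i j))
  split_ifs
  · exact sub_nonneg.mpr (hd1 i)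
  · exact le_rfl

theorem diagonal_one_sub_add_diagonal_mul_map_ofReal_mulVec (d : ι → ℝ) (Φ : Matrix ι ι ℝ)
    (v : ι → ℂ) (i : ι) :
    ((diagonal (1 - d) + diagonal d * Φ).map (fun x : ℝ => (x : ℂ)) *ᵥ v) i
      = (1 - d i) * v i + d i * (Φ.map (fun x : ℝ => (x : ℂ)) *ᵥ v) i := by
  simp [mulVec, dotProduct, diagonal_mul, add_mul, Finset.sum_add_distrib, diagonal_apply,
    Finset.mul_sum, mul_assoc, apply_ite Complex.ofReal, ite_mul]

theorem norm_le_mulVec_norm_of_mulVec_eq_smul {d : ι → ℝ} (hd0 : ∀ i, 0 < d i)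
    (hd1 : ∀ i, d i ≤ 1) {Φ : Matrix ι ι ℝ} (hΦ : ∀ i j, 0 ≤ Φ i j) {z : ℂ} (hz : 1 ≤ ‖z‖)
    {v : ι → ℂ}
    (hv : (diagonal (1 - d) + diagonal d * Φ).map (fun x : ℝ => (x : ℂ)) *ᵥ v = z • v) :
    (fun i => ‖v i‖) ≤ Φ *ᵥ fun i => ‖v i‖ := by
  intro i
  set Φv := (Φ.map (fun x : ℝ => (x : ℂ)) *ᵥ v) i
  have hrow : (z - ((1 - d i : ℝ) : ℂ)) * v i = d i * Φv := by
    have := congrFun hv i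
    rw [diagonal_one_sub_add_diagonal_mul_map_ofReal_mulVec, Pi.smul_apply, smul_eq_mul] at this
    push_cast
    linear_combination -this
  have hzv : d i * (‖z‖ * ‖v i‖) ≤ d i * ‖Φv‖ := calc
    d i * (‖z‖ * ‖v i‖) = d i * ‖z‖ * ‖v i‖ := (mul_assoc ..).symm
    _ ≤ ‖z - ((1 - d i : ℝ) : ℂ)‖ * ‖v i‖ := by
      gcongr
      exact Complex.mul_norm_le_norm_sub_ofReal_one_sub (hd1 i) hz
    _ = d i * ‖Φv‖ := by
      rw [← norm_mul, hrow, norm_mul, Complex.norm_real, Real.norm_of_nonneg (hd0 i).le]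
  calc ‖v i‖ ≤ ‖z‖ * ‖v i‖ := le_mul_of_one_le_left (norm_nonneg _) hz
    _ ≤ ‖Φv‖ := le_of_mul_le_mul_left hzv (hd0 i)
    _ ≤ _ := norm_mulVec_map_ofReal_le hΦ v i

end Matrix

/-- If `Φ` is entrywise nonnegative with spectral radius (largest modulus of a complex
eigenvalue) strictly less than one, and `D` is diagonal with `0 < Dᵢᵢ < 1`, then
`Φ̄ = Iₙ - D + DΦ` is again entrywise nonnegative with spectral radius strictly less
than one. -/
theorem normalization_stays_in_hawkes_parameter_space
    {n : ℕ} (Φ D : Matrix (Fin n) (Fin n) ℝ)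
    (hΦnonneg : ∀ i j, 0 ≤ Φ i j)
    (hΦspec : ∀ z : ℂ, (Φ.map (fun x : ℝ => (x : ℂ))).charpoly.IsRoot z →
      ‖z‖ < 1)
    (hD : D.IsDiag) (hDpos : ∀ i, 0 < D i i) (hDlt : ∀ i, D i i < 1)
    (Φbar : Matrix (Fin n) (Fin n) ℝ)
    (hΦbar : Φbar = 1 - D + D * Φ) :
    (∀ i j, 0 ≤ Φbar i j) ∧
      ∀ z : ℂ, (Φbar.map (fun x : ℝ => (x : ℂ))).charpoly.IsRoot z →
        ‖z‖ < 1 := by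
  have hDle : ∀ i, D i i ≤ 1 := fun i => (hDlt i).le
  rw [hΦbar, ← hD.diagonal_diag, one_sub_diagonal_add_diagonal_mul]
  refine ⟨diagonal_one_sub_add_diagonal_mul_nonneg (fun i => (hDpos i).le) hDle hΦnonneg,
    fun z hz => ?_⟩
  by_contra! hz1
  obtain ⟨v, hv0, hv⟩ := exists_mulVec_eq_smul_of_isRoot_charpoly hz
  have hv_nonpos : (fun i => ‖v i‖) ≤ 0 :=
    le_zero_of_le_mulVec_of_tendsto_pow hΦnonneg
      (tendsto_pow_atTop_nhds_zero_of_isRoot_charpoly_map_ofReal hΦspec)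
      (norm_le_mulVec_norm_of_mulVec_eq_smul hDpos hDle hΦnonneg hz1 hv)
  exact hv0 (funext fun i => norm_le_zero_iff.mp (hv_nonpos i))
end

section
/- Let Φ be an n×n real matrix such that Iₙ − Φ is invertible, and define the causal graph of Φ as the directed graph on {1,…,n} with an edge i → j (for i ≠ j) if and only if Φⱼᵢ ≠ 0; the descendants de(ι) of a node ι are the nodes reachable from ι by a directed path, with ι ∈ de(ι). If c ∉ de(ι), then the (c, ι) entry of (Iₙ − Φ)⁻¹ is zero. -/
open Matrix

/-- The causal graph of `Φ` has an edge `i → j` (for `i ≠ j`) iff `Φ j i ≠ 0`; the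
descendants of `ι` are the nodes reachable from `ι` by a directed path (including `ι`
itself). If `Iₙ - Φ` is invertible and `c` is not a descendant of `ι`, then the
`(c, ι)` entry of `R = (Iₙ - Φ)⁻¹` is zero. -/
theorem total_effect_zero_of_not_descendant
    {n : ℕ} (Φ : Matrix (Fin n) (Fin n) ℝ)
    (hΦ : IsUnit (1 - Φ).det)
    (edge : Fin n → Fin n → Prop)
    (hedge : ∀ i j, edge i j ↔ i ≠ j ∧ Φ j i ≠ 0)
    (ι c : Fin n)
    (hc : ¬ Relation.ReflTransGen edge ι c) :
    (1 - Φ)⁻¹ c ι = 0 := by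
  classical
  haveI : Invertible (1 - Φ) := (1 - Φ).invertibleOfIsUnitDet hΦ
  set b : Fin n → ℕ := fun i => if Relation.ReflTransGen edge ι i then 0 else 1 with hb
  have hBT : BlockTriangular (1 - Φ) b := by
    intro i j hij
    have hj : Relation.ReflTransGen edge ι j := by
      by_contra h
      simp only [hb, if_neg h] at hij
      split at hij <;> omega
    have hi : ¬ Relation.ReflTransGen edge ι i := by
      intro h
      simp [hb, h, hj] at hij
    have hne : i ≠ j := fun h => hi (h ▸ hj)
    have hΦij : Φ i j = 0 := by
      by_contra h
      exact hi (hj.tail ((hedge j i).2 ⟨hne.symm, h⟩))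
    simp [Matrix.sub_apply, Matrix.one_apply_ne hne, hΦij]
  have := Matrix.toBlock_inverse_eq_zero hBT 1
  have hcι : (1 - Φ)⁻¹.toBlock (fun i => 1 ≤ b i) (fun i => b i < 1)
      ⟨c, by simp [hb, hc]⟩ ⟨ι, by simp [hb, Relation.ReflTransGen.refl]⟩ = 0 := by
    rw [this]; rfl
  simpa [Matrix.toBlock_apply] using hcι
end

section
/- Let Φ be an n×n real matrix such that Iₙ − Φ is invertible, let R = (Iₙ − Φ)⁻¹, let Θ be a diagonal n×n matrix with strictly positive diagonal entries, and let C = R Θ Rᵀ. Let I ⊆ {1,…,n} be exogenous, i.e., Φᵢⱼ = 0 for all i ∈ I and j ∉ I. Then Rᵢⱼ = 0 for all i ∈ I and j ∉ I, the submatrix R_II equals ((Iₙ − Φ)_II)⁻¹ and is invertible, and for every subset X ⊆ {1,…,n} one has C_XI = R_XI Θ_II (R_II)ᵀ. -/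
open Matrix

/-- If `I` is exogenous (no `Φ`-entries from outside `I` into `I`, i.e. `Φᵢⱼ = 0` for
`i ∈ I`, `j ∉ I`), `R = (Iₙ - Φ)⁻¹`, `Θ` is diagonal with positive diagonal, and
`C = R Θ Rᵀ`, then: `Rᵢⱼ = 0` for `i ∈ I`, `j ∉ I`; `R_II = ((Iₙ - Φ)_II)⁻¹` is
invertible; and `C_XI = R_XI Θ_II (R_II)ᵀ` for every subset `X`. -/
theorem exogenous_set_integrated_covariance_blocks
    {n : ℕ} (Φ Θ R C : Matrix (Fin n) (Fin n) ℝ)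
    (hΦ : IsUnit (1 - Φ).det)
    (hR : R = (1 - Φ)⁻¹)
    (hΘdiag : Θ.IsDiag) (hΘpos : ∀ i, 0 < Θ i i)
    (hC : C = R * Θ * Rᵀ)
    (I : Finset (Fin n))
    (hExo : ∀ i ∈ I, ∀ j ∉ I, Φ i j = 0) :
    (∀ i ∈ I, ∀ j ∉ I, R i j = 0) ∧
    (R.submatrix (Subtype.val : I → Fin n) (Subtype.val : I → Fin n) =
        ((1 - Φ).submatrix (Subtype.val : I → Fin n) (Subtype.val : I → Fin n))⁻¹ ∧
      IsUnit (R.submatrix (Subtype.val : I → Fin n)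
        (Subtype.val : I → Fin n)).det) ∧
    ∀ X : Finset (Fin n),
      C.submatrix (Subtype.val : X → Fin n) (Subtype.val : I → Fin n) =
        R.submatrix (Subtype.val : X → Fin n) (Subtype.val : I → Fin n) *
          Θ.submatrix (Subtype.val : I → Fin n) (Subtype.val : I → Fin n) *
          (R.submatrix (Subtype.val : I → Fin n) (Subtype.val : I → Fin n))ᵀ := by
  classical
  set A : Matrix (Fin n) (Fin n) ℝ := 1 - Φ with hAdef
  have hAzero : ∀ i ∈ I, ∀ j ∉ I, A i j = 0 := by
    intro i hi j hj
    have hij : i ≠ j := fun h => hj (h ▸ hi)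
    simp [hAdef, Matrix.sub_apply, Matrix.one_apply_ne hij, hExo i hi j hj]
  have hAR : A * R = 1 := by
    rw [hR]; exact Matrix.mul_nonsing_inv _ hΦ
  have hsum : ∀ i ∈ I, ∀ j, ∑ k ∈ I, A i k * R k j
      = (1 : Matrix (Fin n) (Fin n) ℝ) i j := by
    intro i hi j
    rw [← hAR, Matrix.mul_apply]
    apply Finset.sum_subset (Finset.subset_univ I)
    intro k _ hk
    rw [hAzero i hi k hk, zero_mul]
  have hmulII : A.submatrix (Subtype.val : I → Fin n) (Subtype.val : I → Fin n) *
      R.submatrix (Subtype.val : I → Fin n) (Subtype.val : I → Fin n) = 1 := by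
    ext i j
    rw [Matrix.mul_apply]
    simp only [Matrix.submatrix_apply]
    rw [Finset.sum_coe_sort I (fun k => A (i : Fin n) k * R k (j : Fin n)),
      hsum i.val i.2 j.val]
    by_cases h : i = j
    · subst h; simp [Matrix.one_apply]
    · have : (i : Fin n) ≠ (j : Fin n) := fun hh => h (Subtype.ext hh)
      simp [Matrix.one_apply, h, this]
  have hAunit : IsUnit (A.submatrix (Subtype.val : I → Fin n) (Subtype.val : I → Fin n)).det :=
    Matrix.isUnit_det_of_right_inverse hmulII
  have hRII : R.submatrix (Subtype.val : I → Fin n) (Subtype.val : I → Fin n) =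
      (A.submatrix (Subtype.val : I → Fin n) (Subtype.val : I → Fin n))⁻¹ :=
    (Matrix.inv_eq_right_inv hmulII).symm
  have hRunit : IsUnit (R.submatrix (Subtype.val : I → Fin n) (Subtype.val : I → Fin n)).det :=
    Matrix.isUnit_det_of_left_inverse hmulII
  have hRzero : ∀ i ∈ I, ∀ j ∉ I, R i j = 0 := by
    intro i hi j hj
    set v : I → ℝ := fun k => R (k : Fin n) j with hv
    have hv0 : (A.submatrix (Subtype.val : I → Fin n) (Subtype.val : I → Fin n)).mulVec v = 0 := by
      funext i'
      rw [Matrix.mulVec, dotProduct]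
      simp only [Matrix.submatrix_apply, hv]
      rw [Finset.sum_coe_sort I (fun k => A (i' : Fin n) k * R k j),
        hsum i'.val i'.2 j]
      have : (i' : Fin n) ≠ j := fun hh => hj (hh ▸ i'.2)
      simp [Matrix.one_apply_ne this]
    have hv' : v = 0 := by
      have := congrArg
        (fun w => (A.submatrix (Subtype.val : I → Fin n) (Subtype.val : I → Fin n))⁻¹.mulVec w) hv0
      simpa [Matrix.mulVec_mulVec, Matrix.nonsing_inv_mul _ hAunit] using this
    have := congrFun hv' ⟨i, hi⟩
    simpa [hv] using this
  refine ⟨hRzero, ⟨hRII, hRunit⟩, ?_⟩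
  intro X
  ext x i
  have hi : (i : Fin n) ∈ I := i.2
  have hCentry : C (x : Fin n) (i : Fin n)
      = ∑ l ∈ I, R (x : Fin n) l * Θ l l * R (i : Fin n) l := by
    rw [hC, Matrix.mul_apply]
    have hRΘ : ∀ l, (R * Θ) (x : Fin n) l = R (x : Fin n) l * Θ l l := by
      intro l
      rw [Matrix.mul_apply]
      apply Finset.sum_eq_single l
      · intro k _ hk
        rw [hΘdiag hk, mul_zero]
      · intro hl; exact absurd (Finset.mem_univ l) hl
    have : ∑ l : Fin n, (R * Θ) (x : Fin n) l * Rᵀ l (i : Fin n)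
        = ∑ l : Fin n, R (x : Fin n) l * Θ l l * R (i : Fin n) l := by
      refine Finset.sum_congr rfl fun l _ => ?_
      rw [hRΘ l, Matrix.transpose_apply]
    rw [this]
    symm
    apply Finset.sum_subset (Finset.subset_univ I)
    intro l _ hl
    rw [hRzero (i : Fin n) hi l hl, mul_zero]
  simp only [Matrix.mul_apply, Matrix.submatrix_apply, Matrix.transpose_apply]
  rw [hCentry]
  have hRHS : ∀ l : I, ∑ k : I, R (x : Fin n) (k : Fin n) * Θ (k : Fin n) (l : Fin n)
      = R (x : Fin n) (l : Fin n) * Θ (l : Fin n) (l : Fin n) := by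
    intro l
    apply Finset.sum_eq_single l
    · intro k _ hk
      have : (k : Fin n) ≠ (l : Fin n) := fun hh => hk (Subtype.ext hh)
      rw [hΘdiag this, mul_zero]
    · intro hl; exact absurd (Finset.mem_univ l) hl
  have : ∑ l : I, (∑ k : I, R (x : Fin n) (k : Fin n) * Θ (k : Fin n) (l : Fin n))
        * R (i : Fin n) (l : Fin n)
      = ∑ l : I, R (x : Fin n) (l : Fin n) * Θ (l : Fin n) (l : Fin n)
        * R (i : Fin n) (l : Fin n) := by
    refine Finset.sum_congr rfl fun l _ => ?_
    rw [hRHS l]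
  rw [this, Finset.sum_coe_sort I
    (fun l => R (x : Fin n) l * Θ l l * R (i : Fin n) l)]
end

section
/- Let Φ be an n×n real matrix such that Iₙ − Φ is invertible and let R = (Iₙ − Φ)⁻¹. Let I, A, B ⊆ {1,…,n} be pairwise disjoint subsets such that de(I) ∩ pa(B) ⊆ A ∪ B, where in the causal graph of Φ (edge i → j, i ≠ j, iff Φⱼᵢ ≠ 0) de(I) is the set of nodes reachable from some node of I by a directed path (including the nodes of I), and pa(B) is the set of nodes i with an edge i → β for some β ∈ B, together with B itself. Then R_BI = Φ_BA R_AI + Φ_BB R_BI; if moreover I_b − Φ_BB is invertible, then R_BI = (I_b − Φ_BB)⁻¹ Φ_BA R_AI. -/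
open Matrix

lemma inv_support {n : ℕ} (M : Matrix (Fin n) (Fin n) ℝ) (hM : IsUnit M.det)
    (S : Set (Fin n)) (hS : ∀ j ∈ S, ∀ k, k ∉ S → M k j = 0)
    {i k : Fin n} (hi : i ∈ S) (hk : k ∉ S) : M⁻¹ k i = 0 := by
  have inj : Function.Injective (M.mulVec) := by
    intro x y h
    have := congrArg (M⁻¹ *ᵥ ·) h
    simpa [Matrix.mulVec_mulVec, Matrix.nonsing_inv_mul M hM] using this
  let V : Submodule ℝ (Fin n → ℝ) :=
    { carrier := {x | ∀ k, k ∉ S → x k = 0}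
      add_mem' := fun hx hy k hk => by simp [hx k hk, hy k hk]
      zero_mem' := fun k hk => rfl
      smul_mem' := fun c x hx k hk => by simp [hx k hk] }
  have pres : ∀ x ∈ V, M *ᵥ x ∈ V := by
    intro x hx k' hk'
    show ∑ j, M k' j * x j = 0
    refine Finset.sum_eq_zero fun j _ => ?_
    by_cases hj : j ∈ S
    · rw [hS j hj k' hk', zero_mul]
    · rw [hx j hj, mul_zero]
  let f : V →ₗ[ℝ] V :=
    { toFun := fun x => ⟨M *ᵥ x.val, pres x.val x.2⟩
      map_add' := fun x y => Subtype.ext (by simp [Matrix.mulVec_add])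
      map_smul' := fun c x => Subtype.ext (by simp [Matrix.mulVec_smul]) }
  have finj : Function.Injective f := by
    intro x y h
    exact Subtype.ext (inj (congrArg Subtype.val h))
  have fsurj : Function.Surjective f := (LinearMap.injective_iff_surjective).mp finj
  have heV : (Pi.single i (1:ℝ)) ∈ V := by
    intro k' hk'
    exact Pi.single_eq_of_ne (fun h => hk' (by rw [h]; exact hi)) 1
  obtain ⟨v, hv⟩ := fsurj ⟨Pi.single i 1, heV⟩
  have hv' : M *ᵥ v.val = Pi.single i 1 := congrArg Subtype.val hv
  have h2 : M *ᵥ (M⁻¹ *ᵥ Pi.single i 1) = Pi.single i 1 := by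
    rw [Matrix.mulVec_mulVec, Matrix.mul_nonsing_inv M hM, Matrix.one_mulVec]
  have h3 : M⁻¹ *ᵥ Pi.single i 1 = v.val := inj (by rw [h2, hv'])
  have h4 : (M⁻¹ *ᵥ Pi.single i 1) k = M⁻¹ k i := by
    simp [Matrix.mulVec_single]
  rw [← h4, h3]
  exact v.2 k hk

/-- In the causal graph of `Φ` (edge `i → j`, `i ≠ j`, iff `Φ j i ≠ 0`), if
`I, A, B` are pairwise disjoint and `de(I) ∩ pa(B) ⊆ A ∪ B`, then
`R_BI = Φ_BA R_AI + Φ_BB R_BI` where `R = (Iₙ - Φ)⁻¹`; if moreover `I_b - Φ_BB`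
is invertible, then `R_BI = (I_b - Φ_BB)⁻¹ Φ_BA R_AI`. -/
theorem R_block_equation_of_instrumental_structure
    {n : ℕ} (Φ : Matrix (Fin n) (Fin n) ℝ)
    (hΦ : IsUnit (1 - Φ).det)
    (R : Matrix (Fin n) (Fin n) ℝ) (hR : R = (1 - Φ)⁻¹)
    (edge : Fin n → Fin n → Prop)
    (hedge : ∀ i j, edge i j ↔ i ≠ j ∧ Φ j i ≠ 0)
    (I A B : Finset (Fin n))
    (hIA : Disjoint I A) (hIB : Disjoint I B) (hAB : Disjoint A B)
    (hDePa : ∀ v : Fin n, (∃ i ∈ I, Relation.ReflTransGen edge i v) →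
      (v ∈ B ∨ ∃ β ∈ B, edge v β) → v ∈ A ∨ v ∈ B) :
    R.submatrix (Subtype.val : B → Fin n) (Subtype.val : I → Fin n) =
        Φ.submatrix (Subtype.val : B → Fin n) (Subtype.val : A → Fin n) *
          R.submatrix (Subtype.val : A → Fin n) (Subtype.val : I → Fin n) +
        Φ.submatrix (Subtype.val : B → Fin n) (Subtype.val : B → Fin n) *
          R.submatrix (Subtype.val : B → Fin n) (Subtype.val : I → Fin n) ∧
      (IsUnit (1 - Φ.submatrix (Subtype.val : B → Fin n)
          (Subtype.val : B → Fin n)).det →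
        R.submatrix (Subtype.val : B → Fin n) (Subtype.val : I → Fin n) =
          (1 - Φ.submatrix (Subtype.val : B → Fin n)
              (Subtype.val : B → Fin n))⁻¹ *
            Φ.submatrix (Subtype.val : B → Fin n) (Subtype.val : A → Fin n) *
            R.submatrix (Subtype.val : A → Fin n) (Subtype.val : I → Fin n)) := by
  set S : Set (Fin n) := {v | ∃ i ∈ I, Relation.ReflTransGen edge i v} with hSdef
  have hSinv : ∀ j ∈ S, ∀ k, k ∉ S → (1 - Φ) k j = 0 := by
    intro j hj k hk
    have hkj : k ≠ j := fun h => hk (h ▸ hj)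
    have hΦkj : Φ k j = 0 := by
      by_contra h
      exact hk (by
        obtain ⟨i0, hi0, hpath⟩ := hj
        exact ⟨i0, hi0, hpath.tail ((hedge j k).mpr ⟨hkj.symm, h⟩)⟩)
    simp [Matrix.sub_apply, Matrix.one_apply_ne hkj, hΦkj]
  have key : ∀ (β i : Fin n), β ∈ B → i ∈ I →
      R β i = (∑ a ∈ A, Φ β a * R a i) + (∑ b ∈ B, Φ β b * R b i) := by
    intro β i hβ hi
    have hMR : (1 - Φ) * R = 1 := by rw [hR]; exact Matrix.mul_nonsing_inv _ hΦ
    have hβi : β ≠ i := fun h => (Finset.disjoint_left.mp hIB) (h ▸ hi) hβ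
    have hent : ((1 - Φ) * R) β i = 0 := by rw [hMR]; exact Matrix.one_apply_ne hβi
    have hexp : R β i = ∑ j, Φ β j * R j i := by
      have := hent
      rw [Matrix.mul_apply] at this
      simp only [Matrix.sub_apply, Matrix.one_apply, sub_mul] at this
      rw [Finset.sum_sub_distrib] at this
      have h1 : (∑ j, (if β = j then (1:ℝ) else 0) * R j i) = R β i := by
        simp [ite_mul]
      rw [h1] at this
      linarith [this]
    have hvanish : ∀ x ∈ Finset.univ, x ∉ A ∪ B → Φ β x * R x i = 0 := by
      intro x _ hx
      by_cases hΦx : Φ β x = 0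
      · rw [hΦx, zero_mul]
      by_cases hRx : R x i = 0
      · rw [hRx, mul_zero]
      exfalso
      have hxS : x ∈ S := by
        by_contra hxS
        have hz : R x i = 0 := by
          rw [hR]
          exact inv_support (1 - Φ) hΦ S hSinv ⟨i, hi, Relation.ReflTransGen.refl⟩ hxS
        exact hRx hz
      have hpa : x ∈ B ∨ ∃ β' ∈ B, edge x β' := by
        by_cases hxb : x = β
        · exact Or.inl (hxb ▸ hβ)
        · exact Or.inr ⟨β, hβ, (hedge x β).mpr ⟨hxb, hΦx⟩⟩
      rcases hDePa x hxS hpa with h | h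
      · exact hx (Finset.mem_union_left _ h)
      · exact hx (Finset.mem_union_right _ h)
    calc R β i = ∑ j, Φ β j * R j i := hexp
      _ = ∑ j ∈ A ∪ B, Φ β j * R j i :=
          (Finset.sum_subset (Finset.subset_univ _) hvanish).symm
      _ = (∑ a ∈ A, Φ β a * R a i) + (∑ b ∈ B, Φ β b * R b i) :=
          Finset.sum_union hAB
  have h1 : R.submatrix (Subtype.val : B → Fin n) (Subtype.val : I → Fin n) =
        Φ.submatrix (Subtype.val : B → Fin n) (Subtype.val : A → Fin n) *
          R.submatrix (Subtype.val : A → Fin n) (Subtype.val : I → Fin n) +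
        Φ.submatrix (Subtype.val : B → Fin n) (Subtype.val : B → Fin n) *
          R.submatrix (Subtype.val : B → Fin n) (Subtype.val : I → Fin n) := by
    ext β i
    simp only [Matrix.add_apply, Matrix.mul_apply, Matrix.submatrix_apply]
    rw [key β i β.2 i.2]
    congr 1
    · exact (Finset.sum_coe_sort A (fun a => Φ β a * R a i)).symm
    · exact (Finset.sum_coe_sort B (fun b => Φ β b * R b i)).symm
  refine ⟨h1, fun hunit => ?_⟩
  set X := R.submatrix (Subtype.val : B → Fin n) (Subtype.val : I → Fin n)
  set C := Φ.submatrix (Subtype.val : B → Fin n) (Subtype.val : A → Fin n) *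
      R.submatrix (Subtype.val : A → Fin n) (Subtype.val : I → Fin n)
  set D := Φ.submatrix (Subtype.val : B → Fin n) (Subtype.val : B → Fin n)
  have h2 : (1 - D) * X = C := by
    rw [Matrix.sub_mul, Matrix.one_mul]
    exact sub_eq_of_eq_add h1
  calc X = ((1 - D)⁻¹ * (1 - D)) * X := by rw [Matrix.nonsing_inv_mul _ hunit, Matrix.one_mul]
    _ = (1 - D)⁻¹ * ((1 - D) * X) := by rw [Matrix.mul_assoc]
    _ = (1 - D)⁻¹ * C := by rw [h2]
    _ = _ := by rw [Matrix.mul_assoc]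
end

section
/- Let Φ be an n×n real matrix such that Iₙ − Φ is invertible, let Θ be a diagonal n×n matrix with strictly positive diagonal entries, and let C = (Iₙ − Φ)⁻¹ Θ (Iₙ − Φ)⁻ᵀ. Let ι, α, β ∈ {1,…,n} be distinct. Assume: (i) ι is exogenous, i.e., Φ_{ιk} = 0 for all k ≠ ι; (ii) de(ι) ∩ pa(β) ⊆ {α, β} in the causal graph of Φ; (iii) C_{αι} ≠ 0; (iv) Φ_{ββ} ≠ 1. Then C_{βι} / C_{αι} = Φ_{βα} / (1 − Φ_{ββ}). -/
/-!
Write `A = (I - Φ)⁻¹`, so that `C = A Θ Aᵀ`. Exogeneity of `ι` makes row `ι` of `I - Φ`, hence of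
`A`, vanish off the diagonal; with `Θ` diagonal this gives `C v ι = A v ι · Θ ι ι · A ι ι`, so
`C β ι / C α ι = A β ι / A α ι`. Since `I - Φ` is block triangular for the split into `de(ι)`
and its complement, so is `A`: column `ι` of `A` vanishes outside `de(ι)`. Reading row `β` of
`(I - Φ) A = I` at column `ι`, every parent of `β` other than `α` and `β` lies outside `de(ι)`,
which leaves `(1 - Φ β β) A β ι = Φ β α A α ι`.
-/

open Matrix

namespace Matrix

variable {m R : Type*} [Fintype m]

theorem IsDiag.mul_mul_transpose_apply_of_row_eq_zero [CommSemiring R] {A Θ : Matrix m m R}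
    (hΘ : Θ.IsDiag) {i : m} (hrow : ∀ j, j ≠ i → A i j = 0) (k : m) :
    (A * Θ * Aᵀ) k i = A k i * (Θ i i * A i i) := by
  have hAΘ : (A * Θ) k i = A k i * Θ i i :=
    mul_apply.trans <| Finset.sum_eq_single i (fun l _ hl => by rw [hΘ hl, mul_zero]) (by simp)
  rw [mul_apply, Finset.sum_eq_single i (fun j _ hj => by rw [transpose_apply, hrow j hj, mul_zero])
    (by simp), transpose_apply, hAΘ, mul_assoc]

variable [DecidableEq m] [CommRing R]

theorem inv_apply_eq_zero_of_apply_eq_zero {M : Matrix m m R} (S : Set m)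
    (hMS : ∀ i j, j ∈ S → i ∉ S → M i j = 0) {i j : m} (hj : j ∈ S) (hi : i ∉ S) :
    M⁻¹ i j = 0 := by
  by_cases hM : IsUnit M.det
  · let := M.invertibleOfIsUnitDet hM
    -- blocks indexed by `Prop`, with `S` the block `False` below the block `True`
    have hblock : M.BlockTriangular (· ∉ S) := fun i j hlt => by
      have : ((j ∉ S) → (i ∉ S)) ∧ ¬((i ∉ S) → (j ∉ S)) := lt_iff_le_not_ge.mp hlt
      exact hMS i j (by tauto) (by tauto)
    exact blockTriangular_inv_of_blockTriangular hblock
      (lt_iff_le_not_ge.mpr ⟨fun h => absurd hj h, fun h => h hi hj⟩)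
  · simp [nonsing_inv_apply_not_isUnit M hM]

theorem inv_one_sub_apply_eq_zero_of_exogenous {Φ : Matrix m m R} {ι : m}
    (hExo : ∀ k, k ≠ ι → Φ ι k = 0) {j : m} (hj : j ≠ ι) : (1 - Φ)⁻¹ ι j = 0 :=
  inv_apply_eq_zero_of_apply_eq_zero {ι}ᶜ
    (fun i k hk hi => by
      rw [Set.notMem_compl_iff, Set.mem_singleton_iff] at hi
      subst hi
      simp [one_apply_ne' hk, hExo k hk])
    hj (by simp)

theorem inv_one_sub_apply_eq_zero_of_not_reflTransGen {Φ : Matrix m m R} {r : m → m → Prop}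
    (hr : ∀ i j, i ≠ j → Φ j i ≠ 0 → r i j) {ι k : m} (hk : ¬Relation.ReflTransGen r ι k) :
    (1 - Φ)⁻¹ k ι = 0 :=
  inv_apply_eq_zero_of_apply_eq_zero {k | Relation.ReflTransGen r ι k}
    (fun i j hj hi => by
      have hij : i ≠ j := fun h => hi (h ▸ hj)
      have hΦ : Φ i j = 0 := not_not.mp fun h => hi (hj.tail (hr j i hij.symm h))
      simp [one_apply_ne hij, hΦ])
    Relation.ReflTransGen.refl hk

theorem one_sub_diag_mul_inv_one_sub_apply {Φ : Matrix m m R} (hΦ : IsUnit (1 - Φ).det)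
    {ι α β : m} (hιβ : ι ≠ β) (hαβ : α ≠ β)
    (hpa : ∀ k, k ≠ α → k ≠ β → Φ β k = 0 ∨ (1 - Φ)⁻¹ k ι = 0) :
    (1 - Φ β β) * (1 - Φ)⁻¹ β ι = Φ β α * (1 - Φ)⁻¹ α ι := by
  have hrow := congrFun (congrFun (mul_nonsing_inv _ hΦ) β) ι
  rw [mul_apply, Finset.sum_eq_add_of_mem β α (Finset.mem_univ _) (Finset.mem_univ _) hαβ.symm
    (fun k _ ⟨hkβ, hkα⟩ => by
      rcases hpa k hkα hkβ with h | h <;> simp [one_apply_ne hkβ.symm, h]),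
    one_apply_ne hιβ.symm] at hrow
  simp only [sub_apply, one_apply_eq, one_apply_ne hαβ.symm] at hrow
  linear_combination hrow

end Matrix

theorem univariate_instrumental_process_identification_general
    {n : ℕ} (Φ Θ C : Matrix (Fin n) (Fin n) ℝ)
    (hΦ : IsUnit (1 - Φ).det)
    (hΘdiag : Θ.IsDiag)
    (hC : C = (1 - Φ)⁻¹ * Θ * ((1 - Φ)⁻¹)ᵀ)
    (edge : Fin n → Fin n → Prop)
    (hedge : ∀ i j, edge i j ↔ i ≠ j ∧ Φ j i ≠ 0)
    (ι α β : Fin n)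
    (hιβ : ι ≠ β) (hαβ : α ≠ β)
    (hExo : ∀ k, k ≠ ι → Φ ι k = 0)
    (hDePa : ∀ v : Fin n, Relation.ReflTransGen edge ι v →
      (v = β ∨ edge v β) → v = α ∨ v = β)
    (hCαι : C α ι ≠ 0)
    (hΦββ : Φ β β ≠ 1) :
    C β ι / C α ι = Φ β α / (1 - Φ β β) := by
  set A := (1 - Φ)⁻¹
  have hCcol : ∀ v, C v ι = A v ι * (Θ ι ι * A ι ι) := fun v => hC ▸
    hΘdiag.mul_mul_transpose_apply_of_row_eq_zero
      (fun _ => inv_one_sub_apply_eq_zero_of_exogenous hExo) v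
  have hstruct : (1 - Φ β β) * A β ι = Φ β α * A α ι :=
    one_sub_diag_mul_inv_one_sub_apply hΦ hιβ hαβ fun k hkα hkβ =>
      or_iff_not_imp_left.mpr fun hΦk =>
        inv_one_sub_apply_eq_zero_of_not_reflTransGen (fun i j hij h => (hedge i j).mpr ⟨hij, h⟩)
          fun hde => (hDePa k hde (Or.inr ((hedge k β).mpr ⟨hkβ, hΦk⟩))).elim hkα hkβ
  rw [hCcol α] at hCαι
  rw [hCcol β, hCcol α, mul_div_mul_right _ _ (right_ne_zero_of_mul hCαι),
    div_eq_div_iff (left_ne_zero_of_mul hCαι) (sub_ne_zero.mpr hΦββ.symm)]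
  linear_combination hstruct

/-- Univariate instrumental process identification: if `ι` is exogenous,
`de(ι) ∩ pa(β) ⊆ {α, β}` in the causal graph of `Φ` (edge `i → j`, `i ≠ j`, iff
`Φ j i ≠ 0`), `C_{αι} ≠ 0` and `Φ_{ββ} ≠ 1`, then the normalized parameter
`Φ_{βα} / (1 - Φ_{ββ})` is identified by `C_{βι} / C_{αι}`, where
`C = (Iₙ - Φ)⁻¹ Θ (Iₙ - Φ)⁻ᵀ` is the integrated covariance. -/
theorem univariate_instrumental_process_identification
    {n : ℕ} (Φ Θ C : Matrix (Fin n) (Fin n) ℝ)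
    (hΦ : IsUnit (1 - Φ).det)
    (hΘdiag : Θ.IsDiag) (hΘpos : ∀ i, 0 < Θ i i)
    (hC : C = (1 - Φ)⁻¹ * Θ * ((1 - Φ)⁻¹)ᵀ)
    (edge : Fin n → Fin n → Prop)
    (hedge : ∀ i j, edge i j ↔ i ≠ j ∧ Φ j i ≠ 0)
    (ι α β : Fin n)
    (hια : ι ≠ α) (hιβ : ι ≠ β) (hαβ : α ≠ β)
    (hExo : ∀ k, k ≠ ι → Φ ι k = 0)
    (hDePa : ∀ v : Fin n, Relation.ReflTransGen edge ι v →
      (v = β ∨ edge v β) → v = α ∨ v = β)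
    (hCαι : C α ι ≠ 0)
    (hΦββ : Φ β β ≠ 1) :
    C β ι / C α ι = Φ β α / (1 - Φ β β) :=
  univariate_instrumental_process_identification_general Φ Θ C hΦ hΘdiag hC edge hedge ι α β hιβ hαβ
    hExo hDePa hCαι hΦββ
end

section
/- Let Φ be an n×n real matrix such that Iₙ − Φ is invertible, let Θ be a diagonal n×n matrix with strictly positive diagonal entries, and let C = (Iₙ − Φ)⁻¹ Θ (Iₙ − Φ)⁻ᵀ. Let I, A, B ⊆ {1,…,n} be pairwise disjoint nonempty subsets with |I| = |A|. Assume: (i) I is exogenous, i.e., Φᵢⱼ = 0 for all i ∈ I and j ∉ I; (ii) de(I) ∩ pa(B) ⊆ A ∪ B in the causal graph of Φ; (iii) the submatrix C_AI is invertible; (iv) I_b − Φ_BB is invertible. Then C_BI (C_AI)⁻¹ = (I_b − Φ_BB)⁻¹ Φ_BA. -/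
open Matrix

lemma inv_zero_pattern {n : ℕ} (M : Matrix (Fin n) (Fin n) ℝ) (hM : IsUnit M.det)
    (S : Set (Fin n))
    (h : ∀ v, v ∉ S → ∀ u ∈ S, M v u = 0) :
    ∀ v, v ∉ S → ∀ u ∈ S, M⁻¹ v u = 0 := by
  classical
  have hbt : M.BlockTriangular (fun v => if v ∈ S then (0:ℕ) else 1) := by
    intro i j hij
    by_cases hi : i ∈ S <;> by_cases hj : j ∈ S <;>
      simp only [hi, hj, if_true, if_false] at hij ⊢ <;> try omega
    exact h i hi j hj
  haveI : Invertible M := M.invertibleOfIsUnitDet hM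
  have hinv := blockTriangular_inv_of_blockTriangular hbt
  intro v hv u hu
  exact hinv (by simp [hv, hu])

/-- Multivariate instrumental process identification (just identified case):
if `I` is exogenous, `de(I) ∩ pa(B) ⊆ A ∪ B` in the causal graph of `Φ`,
`|I| = |A|`, `C_AI` is invertible with (two-sided) inverse `G`, and `I_b - Φ_BB`
is invertible, then `C_BI (C_AI)⁻¹ = (I_b - Φ_BB)⁻¹ Φ_BA`, where
`C = (Iₙ - Φ)⁻¹ Θ (Iₙ - Φ)⁻ᵀ` is the integrated covariance. -/
theorem multivariate_instrumental_process_identification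
    {n : ℕ} (Φ Θ C : Matrix (Fin n) (Fin n) ℝ)
    (hΦ : IsUnit (1 - Φ).det)
    (hΘdiag : Θ.IsDiag) (hΘpos : ∀ i, 0 < Θ i i)
    (hC : C = (1 - Φ)⁻¹ * Θ * ((1 - Φ)⁻¹)ᵀ)
    (edge : Fin n → Fin n → Prop)
    (hedge : ∀ i j, edge i j ↔ i ≠ j ∧ Φ j i ≠ 0)
    (I A B : Finset (Fin n))
    (hInonempty : I.Nonempty) (hAnonempty : A.Nonempty) (hBnonempty : B.Nonempty)
    (hIA : Disjoint I A) (hIB : Disjoint I B) (hAB : Disjoint A B)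
    (hcard : I.card = A.card)
    (hExo : ∀ i ∈ I, ∀ j ∉ I, Φ i j = 0)
    (hDePa : ∀ v : Fin n, (∃ i ∈ I, Relation.ReflTransGen edge i v) →
      (v ∈ B ∨ ∃ β ∈ B, edge v β) → v ∈ A ∨ v ∈ B)
    (G : Matrix I A ℝ)
    (hG₁ : C.submatrix (Subtype.val : A → Fin n) (Subtype.val : I → Fin n) * G = 1)
    (hG₂ : G * C.submatrix (Subtype.val : A → Fin n) (Subtype.val : I → Fin n) = 1)
    (hBB : IsUnit (1 - Φ.submatrix (Subtype.val : B → Fin n)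
      (Subtype.val : B → Fin n)).det) :
    C.submatrix (Subtype.val : B → Fin n) (Subtype.val : I → Fin n) * G =
      (1 - Φ.submatrix (Subtype.val : B → Fin n) (Subtype.val : B → Fin n))⁻¹ *
        Φ.submatrix (Subtype.val : B → Fin n) (Subtype.val : A → Fin n) := by
  classical
  set M : Matrix (Fin n) (Fin n) ℝ := 1 - Φ with hMdef
  have hMN : M * M⁻¹ = 1 := mul_nonsing_inv M hΦ
  -- exogeneity zero pattern for M⁻¹ : M⁻¹ i v = 0 for i ∈ I, v ∉ I
  have hNexo : ∀ i ∈ I, ∀ v, v ∉ I → M⁻¹ i v = 0 := by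
    have h0 : ∀ v, v ∉ ({x | x ∉ I} : Set (Fin n)) → ∀ u ∈ ({x | x ∉ I} : Set (Fin n)),
        M v u = 0 := by
      intro v hv u hu
      have hvI : v ∈ I := not_not.mp hv
      have hvu : v ≠ u := fun h => hu (h ▸ hvI)
      simp [hMdef, Matrix.sub_apply, Matrix.one_apply_ne hvu, hExo v hvI u hu]
    have := inv_zero_pattern M hΦ _ h0
    intro i hi v hv
    exact this i (not_not.mpr hi) v hv
  -- reachability set
  set R : Set (Fin n) := {v | ∃ i ∈ I, Relation.ReflTransGen edge i v} with hRdef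
  have hIR : ∀ i ∈ I, i ∈ R := fun i hi => ⟨i, hi, Relation.ReflTransGen.refl⟩
  have hNreach : ∀ v, v ∉ R → ∀ u ∈ R, M⁻¹ v u = 0 := by
    apply inv_zero_pattern M hΦ
    intro v hv u hu
    have hvu : v ≠ u := fun h => hv (h ▸ hu)
    have hΦvu : Φ v u = 0 := by
      by_contra hne
      have : edge u v := (hedge u v).mpr ⟨hvu.symm, hne⟩
      exact hv (by obtain ⟨i, hi, hpath⟩ := hu; exact ⟨i, hi, hpath.tail this⟩)
    simp [hMdef, Matrix.sub_apply, Matrix.one_apply_ne hvu, hΦvu]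
  -- C w i = 0 for w ∉ R, i ∈ I
  have hCR : ∀ w, w ∉ R → ∀ i ∈ I, C w i = 0 := by
    intro w hw i hi
    rw [hC]
    simp only [Matrix.mul_apply, Matrix.transpose_apply, ← hMdef]
    apply Finset.sum_eq_zero
    intro j _
    by_cases hj : j ∈ I
    · rw [Finset.sum_eq_zero, zero_mul]
      intro k _
      by_cases hk : k = j
      · subst hk; rw [hNreach w hw k (hIR k hj), zero_mul]
      · rw [hΘdiag hk, mul_zero]
    · rw [hNexo i hi j hj, mul_zero]
  -- row equation : for v ∉ I, i ∈ I : C v i = ∑ w, Φ v w * C w i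
  have hMC : M * C = Θ * (M⁻¹)ᵀ := by
    rw [hC, ← Matrix.mul_assoc, ← Matrix.mul_assoc, hMN, Matrix.one_mul]
  have hrow : ∀ v, v ∉ I → ∀ i ∈ I, C v i = ∑ w, Φ v w * C w i := by
    intro v hv i hi
    have h1 : (M * C) v i = 0 := by
      rw [hMC, Matrix.mul_apply]
      apply Finset.sum_eq_zero
      intro k _
      by_cases hk : k ∈ I
      · have : v ≠ k := fun h => hv (h ▸ hk)
        rw [hΘdiag this, zero_mul]
      · rw [Matrix.transpose_apply, hNexo i hi k hk, mul_zero]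
    have h2 : (M * C) v i = C v i - ∑ w, Φ v w * C w i := by
      rw [Matrix.mul_apply]
      simp only [hMdef, Matrix.sub_apply, sub_mul, Finset.sum_sub_distrib]
      congr 1
      rw [← Matrix.mul_apply, Matrix.one_mul]
    rw [h2] at h1
    linarith
  -- key matrix identity over subtypes
  set ΦBB := Φ.submatrix (Subtype.val : B → Fin n) (Subtype.val : B → Fin n) with hΦBB
  set ΦBA := Φ.submatrix (Subtype.val : B → Fin n) (Subtype.val : A → Fin n) with hΦBA
  set CBI := C.submatrix (Subtype.val : B → Fin n) (Subtype.val : I → Fin n) with hCBI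
  set CAI := C.submatrix (Subtype.val : A → Fin n) (Subtype.val : I → Fin n) with hCAI
  have hkey : (1 - ΦBB) * CBI = ΦBA * CAI := by
    ext b i
    have hbB : (b : Fin n) ∈ B := b.2
    have hbI : (b : Fin n) ∉ I := fun h => (hIB.forall_ne_finset h hbB) rfl
    have hiI : (i : Fin n) ∈ I := i.2
    have hsplit : C (b : Fin n) (i : Fin n) =
        (∑ w ∈ A, Φ (b : Fin n) w * C w (i : Fin n)) +
        (∑ w ∈ B, Φ (b : Fin n) w * C w (i : Fin n)) := by
      rw [hrow b hbI i hiI, ← Finset.sum_union hAB]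
      symm
      apply Finset.sum_subset (Finset.subset_univ _)
      intro w _ hw
      rw [Finset.mem_union] at hw
      push_neg at hw
      obtain ⟨hwA, hwB⟩ := hw
      by_cases hΦbw : Φ (b : Fin n) w = 0
      · rw [hΦbw, zero_mul]
      by_cases hCwi : C w (i : Fin n) = 0
      · rw [hCwi, mul_zero]
      have hwR : w ∈ R := by
        by_contra hwR
        exact hCwi (hCR w hwR i hiI)
      have hwb : w ≠ (b : Fin n) := fun h => hwB (h ▸ hbB)
      have hedge_wb : edge w (b : Fin n) := (hedge w b).mpr ⟨hwb, hΦbw⟩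
      rcases hDePa w hwR (Or.inr ⟨b, hbB, hedge_wb⟩) with h | h
      · exact absurd h hwA
      · exact absurd h hwB
    simp only [Matrix.mul_apply, Matrix.sub_apply, Matrix.submatrix_apply, sub_mul,
      Finset.sum_sub_distrib, hΦBB, hΦBA, hCBI, hCAI]
    have hone : ∑ x : {x // x ∈ B}, (1 : Matrix B B ℝ) b x * C (x : Fin n) (i : Fin n)
        = C (b : Fin n) (i : Fin n) := by
      rw [Finset.sum_eq_single b]
      · rw [Matrix.one_apply_eq, one_mul]
      · intro c _ hcb; rw [Matrix.one_apply_ne' hcb, zero_mul]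
      · intro h; exact absurd (Finset.mem_univ b) h
    rw [hone, hsplit]
    rw [← Finset.sum_coe_sort A, ← Finset.sum_coe_sort B]
    ring
  have hinv : (1 - ΦBB)⁻¹ * (1 - ΦBB) = 1 := nonsing_inv_mul _ hBB
  calc CBI * G = (1 - ΦBB)⁻¹ * ((1 - ΦBB) * CBI * G) := by
        rw [Matrix.mul_assoc, ← Matrix.mul_assoc ((1 - ΦBB)⁻¹), hinv, Matrix.one_mul]
    _ = (1 - ΦBB)⁻¹ * (ΦBA * (CAI * G)) := by rw [hkey, Matrix.mul_assoc]
    _ = (1 - ΦBB)⁻¹ * ΦBA := by rw [hG₁, Matrix.mul_one]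
end

section
/- Let Φ be an n×n real matrix such that Iₙ − Φ is invertible, let Θ be a diagonal n×n matrix with strictly positive diagonal entries, and let C = (Iₙ − Φ)⁻¹ Θ (Iₙ − Φ)⁻ᵀ. Let I, A, B ⊆ {1,…,n} be pairwise disjoint nonempty subsets (possibly with |A| < |I|). Assume: (i) I is exogenous, i.e., Φᵢⱼ = 0 for all i ∈ I and j ∉ I; (ii) de(I) ∩ pa(B) ⊆ A ∪ B in the causal graph of Φ; (iii) I_b − Φ_BB is invertible. Then for every |I|×|A| matrix G with C_AI G = I_a (a right inverse of C_AI), one has C_BI G = (I_b − Φ_BB)⁻¹ Φ_BA. -/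
open Matrix

private lemma inv_block_zero {n : ℕ} (M : Matrix (Fin n) (Fin n) ℝ) (h : IsUnit M.det)
    (S : Set (Fin n)) (hS : ∀ i ∈ S, ∀ j ∉ S, M i j = 0) :
    ∀ i ∈ S, ∀ j ∉ S, M⁻¹ i j = 0 := by
  classical
  haveI := M.invertibleOfIsUnitDet h
  have hbt : M.BlockTriangular (fun v => if v ∈ S then (1:ℕ) else 0) := by
    intro i j hij
    by_cases hiS : i ∈ S <;> by_cases hjS : j ∈ S <;>
      simp [hiS, hjS] at hij ⊢
    exact hS i hiS j hjS
  have := blockTriangular_inv_of_blockTriangular hbt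
  intro i hi j hj
  exact this (by simp [hi, hj])

/-- Overidentified instrumental process: if `I` is exogenous,
`de(I) ∩ pa(B) ⊆ A ∪ B` in the causal graph of `Φ`, and `I_b - Φ_BB` is
invertible, then for every right inverse `G` of `C_AI` one has
`C_BI G = (I_b - Φ_BB)⁻¹ Φ_BA`, where `C = (Iₙ - Φ)⁻¹ Θ (Iₙ - Φ)⁻ᵀ`. -/
theorem overidentified_instrumental_process_identification
    {n : ℕ} (Φ Θ C : Matrix (Fin n) (Fin n) ℝ)
    (hΦ : IsUnit (1 - Φ).det)
    (hΘdiag : Θ.IsDiag) (hΘpos : ∀ i, 0 < Θ i i)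
    (hC : C = (1 - Φ)⁻¹ * Θ * ((1 - Φ)⁻¹)ᵀ)
    (edge : Fin n → Fin n → Prop)
    (hedge : ∀ i j, edge i j ↔ i ≠ j ∧ Φ j i ≠ 0)
    (I A B : Finset (Fin n))
    (hInonempty : I.Nonempty) (hAnonempty : A.Nonempty) (hBnonempty : B.Nonempty)
    (hIA : Disjoint I A) (hIB : Disjoint I B) (hAB : Disjoint A B)
    (hExo : ∀ i ∈ I, ∀ j ∉ I, Φ i j = 0)
    (hDePa : ∀ v : Fin n, (∃ i ∈ I, Relation.ReflTransGen edge i v) →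
      (v ∈ B ∨ ∃ β ∈ B, edge v β) → v ∈ A ∨ v ∈ B)
    (hBB : IsUnit (1 - Φ.submatrix (Subtype.val : B → Fin n)
      (Subtype.val : B → Fin n)).det) :
    ∀ G : Matrix I A ℝ,
      C.submatrix (Subtype.val : A → Fin n) (Subtype.val : I → Fin n) * G = 1 →
      C.submatrix (Subtype.val : B → Fin n) (Subtype.val : I → Fin n) * G =
        (1 - Φ.submatrix (Subtype.val : B → Fin n)
            (Subtype.val : B → Fin n))⁻¹ *
          Φ.submatrix (Subtype.val : B → Fin n) (Subtype.val : A → Fin n) := by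
  classical
  intro G hG
  set D : Set (Fin n) := {v | ∃ i ∈ I, Relation.ReflTransGen edge i v} with hD
  have hID : ∀ i ∈ I, i ∈ D := fun i hi => ⟨i, hi, Relation.ReflTransGen.refl⟩
  -- (1-Φ)⁻¹ zero on (I, Iᶜ)
  have hIinv : ∀ i ∈ I, ∀ j, j ∉ I → (1 - Φ)⁻¹ i j = 0 := by
    have := inv_block_zero (1 - Φ) hΦ (↑I : Set (Fin n)) (by
      intro i hi j hj
      have hij : i ≠ j := fun h => hj (h ▸ hi)
      simp only [Matrix.sub_apply, Matrix.one_apply_ne hij, hExo i hi j hj, sub_zero])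
    intro i hi j hj; exact this i hi j hj
  -- (1-Φ)⁻¹ zero on (Dᶜ, D)
  have hDinv : ∀ w, w ∉ D → ∀ k ∈ D, (1 - Φ)⁻¹ w k = 0 := by
    have := inv_block_zero (1 - Φ) hΦ Dᶜ (by
      intro w hw k hk
      have hkD : k ∈ D := not_not.mp hk
      have hwk : w ≠ k := fun h => hw (h ▸ hkD)
      have hΦwk : Φ w k = 0 := by
        by_contra hne
        obtain ⟨i, hi, hpath⟩ := hkD
        exact hw ⟨i, hi, hpath.tail ((hedge k w).mpr ⟨hwk.symm, hne⟩)⟩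
      simp only [Matrix.sub_apply, Matrix.one_apply_ne hwk, hΦwk, sub_zero])
    intro w hw k hk; exact this w hw k (not_not.mpr hk)
  -- Θ * (1-Φ)⁻ᵀ vanishes at (k, i) for i ∈ I, k ∉ I
  have hTh : ∀ k, k ∉ I → ∀ i ∈ I, (Θ * ((1 - Φ)⁻¹)ᵀ : Matrix (Fin n) (Fin n) ℝ) k i = 0 := by
    intro k hk i hi
    rw [Matrix.mul_apply]
    apply Finset.sum_eq_zero
    intro l _
    by_cases hlk : l = k
    · subst hlk; rw [Matrix.transpose_apply, hIinv i hi l hk, mul_zero]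
    · rw [hΘdiag (Ne.symm hlk), zero_mul]
  -- C vanishes at (w, i) for w ∉ D, i ∈ I
  have hCzero : ∀ w, w ∉ D → ∀ i ∈ I, C w i = 0 := by
    intro w hw i hi
    rw [hC, Matrix.mul_assoc, Matrix.mul_apply]
    apply Finset.sum_eq_zero
    intro k _
    by_cases hkD : k ∈ D
    · rw [hDinv w hw k hkD, zero_mul]
    · rw [hTh k (fun h => hkD (hID k h)) i hi, mul_zero]
  -- key pointwise identity
  have hkey : ∀ v ∈ B, ∀ i ∈ I,
      C v i = (∑ a ∈ A, Φ v a * C a i) + ∑ b ∈ B, Φ v b * C b i := by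
    intro v hv i hi
    have hvI : v ∉ I := fun h => (Finset.disjoint_left.mp hIB) h hv
    have h0 : ((1 - Φ) * C : Matrix (Fin n) (Fin n) ℝ) v i = 0 := by
      have : (1 - Φ) * C = Θ * ((1 - Φ)⁻¹)ᵀ := by
        rw [hC, ← Matrix.mul_assoc, ← Matrix.mul_assoc, Matrix.mul_nonsing_inv _ hΦ,
          Matrix.one_mul]
      rw [this]; exact hTh v hvI i hi
    have h1 : C v i = ∑ w, Φ v w * C w i := by
      have := h0
      rw [Matrix.sub_mul, Matrix.one_mul, Matrix.sub_apply, sub_eq_zero] at this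
      rw [this, Matrix.mul_apply]
    have h2 : ∑ w, Φ v w * C w i = ∑ w ∈ A ∪ B, Φ v w * C w i := by
      symm
      apply Finset.sum_subset (Finset.subset_univ _)
      intro w _ hw
      by_cases hΦvw : Φ v w = 0
      · rw [hΦvw, zero_mul]
      by_cases hwD : w ∈ D
      · exfalso
        have hwv : w ∈ B ∨ ∃ β ∈ B, edge w β := by
          by_cases hwvEq : w = v
          · exact Or.inl (hwvEq ▸ hv)
          · exact Or.inr ⟨v, hv, (hedge w v).mpr ⟨hwvEq, hΦvw⟩⟩
        rcases hDePa w hwD hwv with h | h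
        · exact hw (Finset.mem_union_left _ h)
        · exact hw (Finset.mem_union_right _ h)
      · rw [hCzero w hwD i hi, mul_zero]
    rw [h1, h2, Finset.sum_union hAB]
  -- matrix identity (1 - Φ_BB) * C_BI = Φ_BA * C_AI
  set Cb := C.submatrix (Subtype.val : B → Fin n) (Subtype.val : I → Fin n) with hCb
  set Ca := C.submatrix (Subtype.val : A → Fin n) (Subtype.val : I → Fin n) with hCa
  set Pbb := Φ.submatrix (Subtype.val : B → Fin n) (Subtype.val : B → Fin n) with hPbb
  set Pba := Φ.submatrix (Subtype.val : B → Fin n) (Subtype.val : A → Fin n) with hPba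
  have hmat : (1 - Pbb) * Cb = Pba * Ca := by
    ext ⟨v, hv⟩ ⟨i, hi⟩
    have lhs : ((1 - Pbb) * Cb : Matrix B I ℝ) ⟨v, hv⟩ ⟨i, hi⟩ = C v i - ∑ b ∈ B, Φ v b * C b i := by
      rw [Matrix.sub_mul, Matrix.one_mul, Matrix.sub_apply, Matrix.mul_apply]
      congr 1
      rw [← Finset.sum_coe_sort B (fun b => Φ v b * C b i)]
      rfl
    have rhs : (Pba * Ca : Matrix B I ℝ) ⟨v, hv⟩ ⟨i, hi⟩ = ∑ a ∈ A, Φ v a * C a i := by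
      rw [Matrix.mul_apply, ← Finset.sum_coe_sort A (fun a => Φ v a * C a i)]
      rfl
    rw [lhs, rhs, hkey v hv i hi]
    ring
  have hfin : (1 - Pbb) * (Cb * G) = Pba := by
    rw [← Matrix.mul_assoc, hmat, Matrix.mul_assoc, hG, Matrix.mul_one]
  calc Cb * G = (1 - Pbb)⁻¹ * ((1 - Pbb) * (Cb * G)) := by
        rw [← Matrix.mul_assoc, Matrix.nonsing_inv_mul _ hBB, Matrix.one_mul]
    _ = (1 - Pbb)⁻¹ * Pba := by rw [hfin]
end

section
/- Let Φ be an n×n real matrix such that Iₙ − Φ is invertible, let R = (Iₙ − Φ)⁻¹, let Θ be a diagonal n×n matrix with strictly positive diagonal entries, let C = R Θ Rᵀ, and let I, A, B ⊆ {1,…,n} be pairwise disjoint nonempty subsets with I exogenous (Φᵢⱼ = 0 for all i ∈ I, j ∉ I). If G is an |I|×|A| matrix with C_AI G = I_a, then R_AI (Θ_II (R_II)ᵀ G) = I_a, i.e., Θ_II (R_II)ᵀ G is a right inverse of R_AI; moreover R_BI Θ_II (R_II)ᵀ G = C_BI G. -/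
open Matrix

/-- If `I` is exogenous for `Φ`, then `R = (1 - Φ)⁻¹` vanishes on rows in `I`,
columns outside `I`. -/
lemma exo_R_block {n : ℕ} (Φ R : Matrix (Fin n) (Fin n) ℝ)
    (hΦ : IsUnit (1 - Φ).det) (hR : R = (1 - Φ)⁻¹)
    (I : Finset (Fin n)) (hExo : ∀ i ∈ I, ∀ j ∉ I, Φ i j = 0) :
    ∀ i ∈ I, ∀ j ∉ I, R i j = 0 := by
  set M : Matrix (Fin n) (Fin n) ℝ := 1 - Φ with hM
  have hMR : M * R = 1 := by rw [hR]; exact Matrix.mul_nonsing_inv _ hΦ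
  have hM0 : ∀ i ∈ I, ∀ k ∉ I, M i k = 0 := by
    intro i hi k hk
    have hne : i ≠ k := fun h => hk (h ▸ hi)
    simp [hM, Matrix.sub_apply, Matrix.one_apply_ne hne, hExo i hi k hk]
  set E : Matrix I I ℝ := M.submatrix Subtype.val Subtype.val with hE
  set Q : Matrix I (Fin n) ℝ := R.submatrix Subtype.val id with hQ
  set P : Matrix I I ℝ := R.submatrix Subtype.val Subtype.val with hP
  have hEQ : ∀ (i : I) (j : Fin n), (E * Q) i j = (M * R) (i : Fin n) j := by
    intro i j
    rw [Matrix.mul_apply, Matrix.mul_apply]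
    have h1 : ∑ k : I, E i k * Q k j = ∑ k ∈ I, M (i : Fin n) k * R k j := by
      rw [← Finset.sum_coe_sort I (fun k => M (i : Fin n) k * R k j)]
      rfl
    rw [h1]
    refine Finset.sum_subset (Finset.subset_univ I) ?_
    intro k _ hk
    rw [hM0 i i.2 k hk, zero_mul]
  have hEP : E * P = 1 := by
    ext i j
    have : (E * P) i j = (E * Q) i (j : Fin n) := by
      rw [Matrix.mul_apply, Matrix.mul_apply]
      rfl
    rw [this, hEQ i (j : Fin n), hMR]
    by_cases h : i = j
    · subst h; simp [Matrix.one_apply]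
    · have : (i : Fin n) ≠ (j : Fin n) := fun hc => h (Subtype.ext hc)
      simp [Matrix.one_apply, this, h]
  have hPE : P * E = 1 := mul_eq_one_comm.mp hEP
  intro i hi j hj
  have hQeq : Q = P * (E * Q) := by
    rw [← Matrix.mul_assoc, hPE, Matrix.one_mul]
  have : R i j = Q ⟨i, hi⟩ j := rfl
  rw [this, hQeq, Matrix.mul_apply]
  apply Finset.sum_eq_zero
  intro k _
  have : (E * Q) k j = 0 := by
    rw [hEQ k j, hMR]
    exact Matrix.one_apply_ne (fun hc => hj (hc ▸ k.2))
  rw [this, mul_zero]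

lemma C_sub_eq {n : ℕ} (Φ Θ R C : Matrix (Fin n) (Fin n) ℝ)
    (hΦ : IsUnit (1 - Φ).det) (hR : R = (1 - Φ)⁻¹)
    (hΘdiag : Θ.IsDiag) (hC : C = R * Θ * Rᵀ)
    (I : Finset (Fin n)) (hExo : ∀ i ∈ I, ∀ j ∉ I, Φ i j = 0)
    (X : Finset (Fin n)) :
    C.submatrix (Subtype.val : X → Fin n) (Subtype.val : I → Fin n) =
      R.submatrix (Subtype.val : X → Fin n) (Subtype.val : I → Fin n) *
        (Θ.submatrix (Subtype.val : I → Fin n) (Subtype.val : I → Fin n) *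
          (R.submatrix (Subtype.val : I → Fin n) (Subtype.val : I → Fin n))ᵀ) := by
  have hRblock := exo_R_block Φ R hΦ hR I hExo
  ext x i
  have hdiag : ∀ (a : Fin n) (f : Fin n → ℝ), ∑ l, Θ a l * f l = Θ a a * f a := by
    intro a f
    refine Fintype.sum_eq_single a ?_
    intro l hl
    rw [hΘdiag (fun h => hl h.symm), zero_mul]
  -- RHS
  have hrhs : (R.submatrix (Subtype.val : X → Fin n) (Subtype.val : I → Fin n) *
      (Θ.submatrix (Subtype.val : I → Fin n) (Subtype.val : I → Fin n) *
        (R.submatrix (Subtype.val : I → Fin n) (Subtype.val : I → Fin n))ᵀ)) x i =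
      ∑ k : I, R (x : Fin n) k * (Θ (k : Fin n) k * R (i : Fin n) k) := by
    rw [Matrix.mul_apply]
    congr 1
    ext k
    rw [Matrix.mul_apply]
    congr 1
    refine Fintype.sum_eq_single k ?_
    intro l hl
    have : Θ (k : Fin n) (l : Fin n) = 0 :=
      hΘdiag (fun h => hl (Subtype.ext h).symm)
    simp [this]
  rw [Matrix.submatrix_apply, hrhs, hC]
  -- LHS
  have hlhs : (R * Θ * Rᵀ) (x : Fin n) (i : Fin n) =
      ∑ l : Fin n, R (x : Fin n) l * Θ l l * R (i : Fin n) l := by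
    rw [Matrix.mul_apply]
    congr 1
    ext l
    rw [Matrix.transpose_apply, Matrix.mul_apply]
    congr 1
    refine Fintype.sum_eq_single l ?_
    intro m hm
    rw [hΘdiag hm, mul_zero]
  rw [hlhs]
  have h1 : ∑ l : Fin n, R (x : Fin n) l * Θ l l * R (i : Fin n) l =
      ∑ l ∈ I, R (x : Fin n) l * Θ l l * R (i : Fin n) l := by
    refine (Finset.sum_subset (Finset.subset_univ I) ?_).symm
    intro l _ hl
    rw [hRblock (i : Fin n) i.2 l hl, mul_zero]
  rw [h1, ← Finset.sum_coe_sort I (fun l => R (x : Fin n) l * Θ l l * R (i : Fin n) l)]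
  congr 1
  ext k
  ring

/-- In the overidentified setting, a right inverse `G` of `C_AI` induces the right
inverse `Θ_II (R_II)ᵀ G` of `R_AI`, and `R_BI Θ_II (R_II)ᵀ G = C_BI G`, where
`R = (Iₙ - Φ)⁻¹`, `C = R Θ Rᵀ`, and `I` is exogenous. -/
theorem right_inverse_of_C_gives_right_inverse_of_R
    {n : ℕ} (Φ Θ R C : Matrix (Fin n) (Fin n) ℝ)
    (hΦ : IsUnit (1 - Φ).det)
    (hR : R = (1 - Φ)⁻¹)
    (hΘdiag : Θ.IsDiag) (hΘpos : ∀ i, 0 < Θ i i)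
    (hC : C = R * Θ * Rᵀ)
    (I A B : Finset (Fin n))
    (hInonempty : I.Nonempty) (hAnonempty : A.Nonempty) (hBnonempty : B.Nonempty)
    (hIA : Disjoint I A) (hIB : Disjoint I B) (hAB : Disjoint A B)
    (hExo : ∀ i ∈ I, ∀ j ∉ I, Φ i j = 0)
    (G : Matrix I A ℝ)
    (hG : C.submatrix (Subtype.val : A → Fin n) (Subtype.val : I → Fin n) * G = 1) :
    R.submatrix (Subtype.val : A → Fin n) (Subtype.val : I → Fin n) *
        (Θ.submatrix (Subtype.val : I → Fin n) (Subtype.val : I → Fin n) *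
          (R.submatrix (Subtype.val : I → Fin n) (Subtype.val : I → Fin n))ᵀ * G) =
        1 ∧
      R.submatrix (Subtype.val : B → Fin n) (Subtype.val : I → Fin n) *
          Θ.submatrix (Subtype.val : I → Fin n) (Subtype.val : I → Fin n) *
          (R.submatrix (Subtype.val : I → Fin n) (Subtype.val : I → Fin n))ᵀ * G =
        C.submatrix (Subtype.val : B → Fin n) (Subtype.val : I → Fin n) * G := by
  have hA := C_sub_eq Φ Θ R C hΦ hR hΘdiag hC I hExo A
  have hB := C_sub_eq Φ Θ R C hΦ hR hΘdiag hC I hExo B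
  constructor
  · calc R.submatrix (Subtype.val : A → Fin n) (Subtype.val : I → Fin n) *
        (Θ.submatrix (Subtype.val : I → Fin n) (Subtype.val : I → Fin n) *
          (R.submatrix (Subtype.val : I → Fin n) (Subtype.val : I → Fin n))ᵀ * G)
        = C.submatrix (Subtype.val : A → Fin n) (Subtype.val : I → Fin n) * G := by
          rw [hA]; simp only [Matrix.mul_assoc]
      _ = 1 := hG
  · rw [hB]; simp only [Matrix.mul_assoc]
end

section
/- Let (Ω, P) be a probability space, let p ≥ 1, and let X^I : ℤ → Ω → ℝ^{d_I}, X^A : ℤ → Ω → ℝ^{d_A}, X^B : ℤ → Ω → ℝ^{d_B} be square-integrable processes. Let Φ_{j,BA} (d_B×d_A) and Φ_{j,BB} (d_B×d_B) for j = 1, …, p be real matrices, set Φ_BA = ∑_{j=1}^p Φ_{j,BA} and Φ_BB = ∑_{j=1}^p Φ_{j,BB}, and define ε_t = X_t^B − ∑_{j=1}^p Φ_{j,BA} X_{t−j}^A − ∑_{j=1}^p Φ_{j,BB} X_{t−j}^B. Assume: (i) E[ε_t (X_s^I)ᵀ] = 0 for all t, s ∈ ℤ (expectations of matrix products taken entrywise);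 (ii) there are functions γ_AI, γ_BI : ℤ → Matrix with E[X_t^A (X_{t+k}^I)ᵀ] = γ_AI(k) and E[X_t^B (X_{t+k}^I)ᵀ] = γ_BI(k) for all t, k ∈ ℤ; (iii) γ_AI and γ_BI are summable over ℤ entrywise, and set C_AI = ∑'_{k∈ℤ} γ_AI(k), C_BI = ∑'_{k∈ℤ} γ_BI(k); (iv) I_{d_B} − Φ_BB is invertible. Then C_BI = Φ_BA C_AI + Φ_BB C_BI, and hence C_BI = (I_{d_B} − Φ_BB)⁻¹ Φ_BA C_AI. -/
/-!
Write `E[X Yᵀ]` for the matrix of mixed second moments. It is linear in `X` on square-integrable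
vectors, so pairing the regression residual `ε_0` with `X_k^I` and using stationarity gives, for
every lag `k`, `γ_BI(k) = ∑_j Φ_{j,BA} γ_AI(k + j) + ∑_j Φ_{j,BB} γ_BI(k + j)`. Summing over
`k ∈ ℤ`, each shifted series has the same sum as the unshifted one, which yields
`C_BI = Φ_BA C_AI + Φ_BB C_BI`; the second identity solves this for `C_BI`.
-/

open MeasureTheory Matrix

section CrossMoment

variable {Ω : Type*} [MeasurableSpace Ω] {P : Measure Ω} {ι l m n : Type*} [Fintype m]
  [Fintype n]

noncomputable def crossMoment (P : Measure Ω) (X : Ω → m → ℝ) (Y : Ω → n → ℝ) : Matrix m n ℝ :=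
  of fun i j => ∫ ω, X ω i * Y ω j ∂P

lemma integrable_mul_apply_of_memLp_two {X : Ω → m → ℝ} {Y : Ω → n → ℝ}
    (hX : MemLp X 2 P) (hY : MemLp Y 2 P) (i : m) (j : n) :
    Integrable (fun ω => X ω i * Y ω j) P :=
  (hX.eval i).integrable_mul (hY.eval j)

lemma memLp_mulVec [Fintype l] {p : ENNReal} {X : Ω → m → ℝ} (hX : MemLp X p P)
    (M : Matrix l m ℝ) :
    MemLp (fun ω => M *ᵥ X ω) p P :=
  hX.continuousLinearMap_comp (LinearMap.toContinuousLinearMap (mulVecLin M))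

variable {X X' : Ω → m → ℝ} {Y : Ω → n → ℝ}

lemma crossMoment_sub (hX : MemLp X 2 P) (hX' : MemLp X' 2 P) (hY : MemLp Y 2 P) :
    crossMoment P (X - X') Y = crossMoment P X Y - crossMoment P X' Y := by
  ext i j
  simp only [crossMoment, of_apply, Matrix.sub_apply, Pi.sub_apply, sub_mul]
  exact integral_sub (integrable_mul_apply_of_memLp_two hX hY i j)
    (integrable_mul_apply_of_memLp_two hX' hY i j)

lemma crossMoment_sum {Z : ι → Ω → m → ℝ} (s : Finset ι) (hZ : ∀ k ∈ s, MemLp (Z k) 2 P)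
    (hY : MemLp Y 2 P) :
    crossMoment P (∑ k ∈ s, Z k) Y = ∑ k ∈ s, crossMoment P (Z k) Y := by
  ext i j
  simp only [crossMoment, of_apply, Matrix.sum_apply, Finset.sum_apply, Finset.sum_mul]
  exact integral_finsetSum s fun k hk => integrable_mul_apply_of_memLp_two (hZ k hk) hY i j

lemma crossMoment_mulVec (hX : MemLp X 2 P) (hY : MemLp Y 2 P) (M : Matrix l m ℝ) :
    crossMoment P (fun ω => M *ᵥ X ω) Y = M * crossMoment P X Y := by
  ext i j
  simp only [crossMoment, of_apply, mul_apply, mulVec, dotProduct, Finset.sum_mul, mul_assoc]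
  rw [integral_finsetSum _ fun a _ => (integrable_mul_apply_of_memLp_two hX hY a j).const_mul _]
  simp only [integral_const_mul]

variable [Fintype l] {Z : ι → Ω → l → ℝ}

lemma memLp_sum_mulVec {p : ENNReal} (hZ : ∀ j, MemLp (Z j) p P) (Φ : ι → Matrix m l ℝ)
    (s : Finset ι) : MemLp (∑ j ∈ s, fun ω => Φ j *ᵥ Z j ω) p P :=
  memLp_finsetSum' s fun j _ => memLp_mulVec (hZ j) (Φ j)

lemma crossMoment_sum_mulVec (hZ : ∀ j, MemLp (Z j) 2 P) (hY : MemLp Y 2 P)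
    (Φ : ι → Matrix m l ℝ) (s : Finset ι) :
    crossMoment P (∑ j ∈ s, fun ω => Φ j *ᵥ Z j ω) Y = ∑ j ∈ s, Φ j * crossMoment P (Z j) Y := by
  rw [crossMoment_sum s (fun j _ => memLp_mulVec (hZ j) (Φ j)) hY]
  exact Finset.sum_congr rfl fun j _ => crossMoment_mulVec (hZ j) hY (Φ j)

end CrossMoment

theorem Matrix.hasSum_of_summable_entries {X m n R : Type*} [AddCommMonoid R]
    [TopologicalSpace R] {γ : X → Matrix m n R}
    (h : ∀ i j, Summable fun k => γ k i j) : HasSum γ (of fun i j => ∑' k, γ k i j) :=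
  Pi.hasSum.2 fun i => Pi.hasSum.2 fun j => (h i j).hasSum

theorem HasSum.sum_mul_comp_add {G ι R l m n : Type*} [AddCommGroup G] [Fintype m]
    [Semiring R] [TopologicalSpace R] [IsTopologicalSemiring R]
    {γ : G → Matrix m n R} {C : Matrix m n R} (h : HasSum γ C)
    (Φ : ι → Matrix l m R) (c : ι → G) (s : Finset ι) :
    HasSum (fun k => ∑ j ∈ s, Φ j * γ (k + c j)) ((∑ j ∈ s, Φ j) * C) := by
  rw [Matrix.sum_mul]
  refine hasSum_sum fun j _ => ?_
  exact ((Equiv.addRight (c j)).hasSum_iff.2 h).map (addMonoidHomMulLeft (Φ j))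
    (continuous_const.matrix_mul continuous_id)

theorem Matrix.eq_nonsing_inv_mul_of_eq_add_mul {m n R : Type*} [Fintype m] [DecidableEq m]
    [CommRing R] {A C : Matrix m n R} {B : Matrix m m R} (h : C = A + B * C)
    (hB : IsUnit (1 - B).det) : C = (1 - B)⁻¹ * A := by
  have hC : (1 - B) * C = A := by rw [Matrix.sub_mul, Matrix.one_mul, sub_eq_iff_eq_add]; exact h
  rw [← hC, nonsing_inv_mul_cancel_left _ _ hB]

theorem general_time_series_integrated_covariance_identity_general
    {dI dA dB p : ℕ}
    {Ω : Type*} [MeasurableSpace Ω] (P : Measure Ω)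
    (XI : ℤ → Ω → (Fin dI → ℝ)) (XA : ℤ → Ω → (Fin dA → ℝ))
    (XB : ℤ → Ω → (Fin dB → ℝ))
    (hXIL2 : ∀ t i, MemLp (fun ω => XI t ω i) 2 P)
    (hXAL2 : ∀ t i, MemLp (fun ω => XA t ω i) 2 P)
    (hXBL2 : ∀ t i, MemLp (fun ω => XB t ω i) 2 P)
    (ΦBA : Fin p → Matrix (Fin dB) (Fin dA) ℝ)
    (ΦBB : Fin p → Matrix (Fin dB) (Fin dB) ℝ)
    (ε : ℤ → Ω → (Fin dB → ℝ))
    (hε : ∀ t ω, ε t ω =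
      XB t ω - (∑ j : Fin p, (ΦBA j).mulVec (XA (t - ((j : ℕ) + 1)) ω)) -
        ∑ j : Fin p, (ΦBB j).mulVec (XB (t - ((j : ℕ) + 1)) ω))
    (horth : ∀ t s : ℤ, ∀ (i : Fin dB) (l : Fin dI),
      ∫ ω, ε t ω i * XI s ω l ∂P = 0)
    (γAI : ℤ → Matrix (Fin dA) (Fin dI) ℝ)
    (γBI : ℤ → Matrix (Fin dB) (Fin dI) ℝ)
    (hγAI : ∀ t k : ℤ, ∀ (i : Fin dA) (j : Fin dI),
      ∫ ω, XA t ω i * XI (t + k) ω j ∂P = γAI k i j)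
    (hγBI : ∀ t k : ℤ, ∀ (i : Fin dB) (j : Fin dI),
      ∫ ω, XB t ω i * XI (t + k) ω j ∂P = γBI k i j)
    (hsumAI : ∀ (i : Fin dA) (j : Fin dI), Summable fun k : ℤ => γAI k i j)
    (hsumBI : ∀ (i : Fin dB) (j : Fin dI), Summable fun k : ℤ => γBI k i j)
    (CAI : Matrix (Fin dA) (Fin dI) ℝ)
    (hCAI : CAI = Matrix.of fun i j => ∑' k : ℤ, γAI k i j)
    (CBI : Matrix (Fin dB) (Fin dI) ℝ)
    (hCBI : CBI = Matrix.of fun i j => ∑' k : ℤ, γBI k i j)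
    (hBB : IsUnit (1 - ∑ j, ΦBB j).det) :
    CBI = (∑ j, ΦBA j) * CAI + (∑ j, ΦBB j) * CBI ∧
      CBI = (1 - ∑ j, ΦBB j)⁻¹ * (∑ j, ΦBA j) * CAI := by
  have hI (s : ℤ) : MemLp (XI s) 2 P := MemLp.of_eval (hXIL2 s)
  have hA (t : ℤ) : MemLp (XA t) 2 P := MemLp.of_eval (hXAL2 t)
  have hB (t : ℤ) : MemLp (XB t) 2 P := MemLp.of_eval (hXBL2 t)
  have statA (t s : ℤ) : crossMoment P (XA t) (XI s) = γAI (s - t) := by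
    ext i j; simpa [crossMoment] using hγAI t (s - t) i j
  have statB (t s : ℤ) : crossMoment P (XB t) (XI s) = γBI (s - t) := by
    ext i j; simpa [crossMoment] using hγBI t (s - t) i j
  have lag (k : ℤ) : γBI k = ∑ j, ΦBA j * γAI (k + ((j : ℕ) + 1)) +
      ∑ j, ΦBB j * γBI (k + ((j : ℕ) + 1)) := by
    have hε₀ : ε 0 = XB 0 - (∑ j : Fin p, fun ω => ΦBA j *ᵥ XA (0 - ((j : ℕ) + 1)) ω) -
        ∑ j : Fin p, fun ω => ΦBB j *ᵥ XB (0 - ((j : ℕ) + 1)) ω := by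
      funext ω; simp [hε]
    have h₀ : crossMoment P (ε 0) (XI k) = 0 := ext (horth 0 k)
    rw [hε₀, crossMoment_sub ((hB 0).sub (memLp_sum_mulVec (fun _ => hA _) _ _))
        (memLp_sum_mulVec (fun _ => hB _) _ _) (hI k),
      crossMoment_sub (hB 0) (memLp_sum_mulVec (fun _ => hA _) _ _) (hI k),
      crossMoment_sum_mulVec (fun _ => hA _) (hI k), crossMoment_sum_mulVec (fun _ => hB _) (hI k)]
      at h₀
    simpa only [statA, statB, sub_zero, zero_sub, sub_neg_eq_add, sub_sub, sub_eq_zero] using h₀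
  have hAI : HasSum γAI CAI := hCAI ▸ Matrix.hasSum_of_summable_entries hsumAI
  have hBI : HasSum γBI CBI := hCBI ▸ Matrix.hasSum_of_summable_entries hsumBI
  have h₁ : CBI = (∑ j, ΦBA j) * CAI + (∑ j, ΦBB j) * CBI :=
    hBI.unique <| funext lag ▸
      (hAI.sum_mul_comp_add ΦBA _ Finset.univ).add (hBI.sum_mul_comp_add ΦBB _ Finset.univ)
  exact ⟨h₁, by rw [Matrix.mul_assoc]; exact eq_nonsing_inv_mul_of_eq_add_mul h₁ hBB⟩

/-- Key identity for instrumental processes in general stationary time series: if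
`X_t^B = ∑_j Φ_{j,BA} X_{t-j}^A + ∑_j Φ_{j,BB} X_{t-j}^B + ε_t` with the residual
`ε` uncorrelated with the instrument process `X^I` at all lags, the integrated
cross-covariances `C_AI, C_BI` exist (shift-invariant and summable lagged
cross-covariances), and `I_{d_B} - Φ_BB` is invertible, then
`C_BI = Φ_BA C_AI + Φ_BB C_BI` and hence `C_BI = (I_{d_B} - Φ_BB)⁻¹ Φ_BA C_AI`. -/
theorem general_time_series_integrated_covariance_identity
    {dI dA dB p : ℕ} (hp : 1 ≤ p)
    {Ω : Type*} [MeasurableSpace Ω] (P : Measure Ω) [IsProbabilityMeasure P]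
    (XI : ℤ → Ω → (Fin dI → ℝ)) (XA : ℤ → Ω → (Fin dA → ℝ))
    (XB : ℤ → Ω → (Fin dB → ℝ))
    (hXIL2 : ∀ t i, MemLp (fun ω => XI t ω i) 2 P)
    (hXAL2 : ∀ t i, MemLp (fun ω => XA t ω i) 2 P)
    (hXBL2 : ∀ t i, MemLp (fun ω => XB t ω i) 2 P)
    (ΦBA : Fin p → Matrix (Fin dB) (Fin dA) ℝ)
    (ΦBB : Fin p → Matrix (Fin dB) (Fin dB) ℝ)
    (ε : ℤ → Ω → (Fin dB → ℝ))
    (hε : ∀ t ω, ε t ω =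
      XB t ω - (∑ j : Fin p, (ΦBA j).mulVec (XA (t - ((j : ℕ) + 1)) ω)) -
        ∑ j : Fin p, (ΦBB j).mulVec (XB (t - ((j : ℕ) + 1)) ω))
    (horth : ∀ t s : ℤ, ∀ (i : Fin dB) (l : Fin dI),
      ∫ ω, ε t ω i * XI s ω l ∂P = 0)
    (γAI : ℤ → Matrix (Fin dA) (Fin dI) ℝ)
    (γBI : ℤ → Matrix (Fin dB) (Fin dI) ℝ)
    (hγAI : ∀ t k : ℤ, ∀ (i : Fin dA) (j : Fin dI),
      ∫ ω, XA t ω i * XI (t + k) ω j ∂P = γAI k i j)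
    (hγBI : ∀ t k : ℤ, ∀ (i : Fin dB) (j : Fin dI),
      ∫ ω, XB t ω i * XI (t + k) ω j ∂P = γBI k i j)
    (hsumAI : ∀ (i : Fin dA) (j : Fin dI), Summable fun k : ℤ => γAI k i j)
    (hsumBI : ∀ (i : Fin dB) (j : Fin dI), Summable fun k : ℤ => γBI k i j)
    (CAI : Matrix (Fin dA) (Fin dI) ℝ)
    (hCAI : CAI = Matrix.of fun i j => ∑' k : ℤ, γAI k i j)
    (CBI : Matrix (Fin dB) (Fin dI) ℝ)
    (hCBI : CBI = Matrix.of fun i j => ∑' k : ℤ, γBI k i j)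
    (hBB : IsUnit (1 - ∑ j, ΦBB j).det) :
    CBI = (∑ j, ΦBA j) * CAI + (∑ j, ΦBB j) * CBI ∧
      CBI = (1 - ∑ j, ΦBB j)⁻¹ * (∑ j, ΦBA j) * CAI :=
  general_time_series_integrated_covariance_identity_general P XI XA XB hXIL2 hXAL2 hXBL2 ΦBA ΦBB ε
    hε horth γAI γBI hγAI hγBI hsumAI hsumBI CAI hCAI CBI hCBI hBB
end

section
/- Let (Ω, P) be a probability space, let p ≥ 1, and let X^I : ℤ → Ω → ℝ^{d_I}, X^A : ℤ → Ω → ℝ^{d_A}, X^B : ℤ → Ω → ℝ^{d_B} be square-integrable processes. Let Φ_{j,BA} (d_B×d_A) and Φ_{j,BB} (d_B×d_B) for j = 1, …, p be real matrices, set Φ_BA = ∑_{j=1}^p Φ_{j,BA} and Φ_BB = ∑_{j=1}^p Φ_{j,BB}, and define ε_t = X_t^B − ∑_{j=1}^p Φ_{j,BA} X_{t−j}^A − ∑_{j=1}^p Φ_{j,BB} X_{t−j}^B. Assume: (i) E[ε_t (X_s^I)ᵀ] = 0 for all t, s ∈ ℤ (expectations of matrix products taken entrywise); (ii) there are functions γ_AI,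 γ_BI : ℤ → Matrix with E[X_t^A (X_{t+k}^I)ᵀ] = γ_AI(k) and E[X_t^B (X_{t+k}^I)ᵀ] = γ_BI(k) for all t, k ∈ ℤ; (iii) γ_AI and γ_BI are summable over ℤ entrywise, and set C_AI = ∑'_{k∈ℤ} γ_AI(k), C_BI = ∑'_{k∈ℤ} γ_BI(k); (iv) I_{d_B} − Φ_BB is invertible; (v) G is a d_I×d_A matrix with C_AI G = I_{d_A} (a right inverse of C_AI, which exists since C_AI has full row rank). Then C_BI G = (I_{d_B} − Φ_BB)⁻¹ Φ_BA. -/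
open MeasureTheory Matrix

/-!
Correlating the regression equation for `X^B_t` with `X^I_s` and using stationarity gives, at
every lag `k`, `γ_BI(k) = ∑_j Φ_{j,BA} γ_AI(k + j) + ∑_j Φ_{j,BB} γ_BI(k + j)`. Summing over
`k ∈ ℤ` absorbs the shifts, so `C_BI = Φ_BA C_AI + Φ_BB C_BI`; solving for `C_BI` and multiplying
by the right inverse `G` gives the claim.
-/

namespace MeasureTheory

variable {Ω : Type*} [MeasurableSpace Ω] {P : Measure Ω} {ι l m n : Type*}

noncomputable def crossMoment (P : Measure Ω) (X : Ω → m → ℝ) (Y : Ω → n → ℝ) : Matrix m n ℝ :=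
  Matrix.of fun i j => ∫ ω, X ω i * Y ω j ∂P

section

variable [Fintype m] [Fintype n] {X X' : Ω → m → ℝ} {Y : Ω → n → ℝ}

lemma MemLp.integrable_mul_apply (hX : MemLp X 2 P) (hY : MemLp Y 2 P) (i : m) (j : n) :
    Integrable (fun ω => X ω i * Y ω j) P :=
  (hX.eval i).integrable_mul (hY.eval j)

lemma crossMoment_sub (hX : MemLp X 2 P) (hX' : MemLp X' 2 P) (hY : MemLp Y 2 P) :
    crossMoment P (X - X') Y = crossMoment P X Y - crossMoment P X' Y := by
  ext i j
  simp only [crossMoment, of_apply, Matrix.sub_apply, Pi.sub_apply, sub_mul]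
  exact integral_sub (hX.integrable_mul_apply hY i j) (hX'.integrable_mul_apply hY i j)

lemma crossMoment_finset_sum {X : ι → Ω → m → ℝ} (s : Finset ι) (hX : ∀ k ∈ s, MemLp (X k) 2 P)
    (hY : MemLp Y 2 P) :
    crossMoment P (∑ k ∈ s, X k) Y = ∑ k ∈ s, crossMoment P (X k) Y := by
  ext i j
  simp only [crossMoment, of_apply, Matrix.sum_apply, Finset.sum_apply, Finset.sum_mul]
  exact integral_finsetSum s fun k hk => (hX k hk).integrable_mul_apply hY i j

lemma MemLp.mulVec [Fintype l] {p : ENNReal} (A : Matrix l m ℝ) (hX : MemLp X p P) :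
    MemLp (fun ω => A *ᵥ X ω) p P :=
  hX.continuousLinearMap_comp (mulVecLin A).toContinuousLinearMap

lemma crossMoment_mulVec (A : Matrix l m ℝ) (hX : MemLp X 2 P) (hY : MemLp Y 2 P) :
    crossMoment P (fun ω => A *ᵥ X ω) Y = A * crossMoment P X Y := by
  ext i j
  simp only [crossMoment, of_apply, mul_apply, mulVec, dotProduct, Finset.sum_mul, mul_assoc]
  rw [integral_finsetSum _ fun k _ => (hX.integrable_mul_apply hY k j).const_mul _]
  simp only [integral_const_mul]

end

lemma crossMoment_eq_of_stationary {X : ℤ → Ω → m → ℝ} {Y : ℤ → Ω → n → ℝ}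
    {γ : ℤ → Matrix m n ℝ} (hγ : ∀ t k, crossMoment P (X t) (Y (t + k)) = γ k) (t s : ℤ) :
    crossMoment P (X t) (Y s) = γ (s - t) := by
  simpa using hγ t (s - t)

variable {mA mB mI : Type*} [Fintype mA] [Fintype mB] [Fintype mI] [Fintype ι]

theorem crossMoment_recursion_of_uncorrelated_residual
    {XA : ℤ → Ω → mA → ℝ} {XB : ℤ → Ω → mB → ℝ} {XI : ℤ → Ω → mI → ℝ}
    (hXA : ∀ t, MemLp (XA t) 2 P) (hXB : ∀ t, MemLp (XB t) 2 P) (hXI : ∀ t, MemLp (XI t) 2 P)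
    (ΦA : ι → Matrix mB mA ℝ) (ΦB : ι → Matrix mB mB ℝ) (lag : ι → ℤ)
    {ε : ℤ → Ω → mB → ℝ}
    (hε : ∀ t ω, ε t ω = XB t ω - (∑ j, ΦA j *ᵥ XA (t - lag j) ω) - ∑ j, ΦB j *ᵥ XB (t - lag j) ω)
    (horth : ∀ t s, crossMoment P (ε t) (XI s) = 0)
    {γA : ℤ → Matrix mA mI ℝ} {γB : ℤ → Matrix mB mI ℝ}
    (hγA : ∀ t k, crossMoment P (XA t) (XI (t + k)) = γA k)
    (hγB : ∀ t k, crossMoment P (XB t) (XI (t + k)) = γB k) (k : ℤ) :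
    γB k = ∑ j, ΦA j * γA (k + lag j) + ∑ j, ΦB j * γB (k + lag j) := by
  have hε_zero : ε 0 = XB 0 - ∑ j, (fun ω => ΦA j *ᵥ XA (-lag j) ω)
      - ∑ j, (fun ω => ΦB j *ᵥ XB (-lag j) ω) := by
    funext ω
    simp only [hε, zero_sub, Pi.sub_apply, Finset.sum_apply]
  have hSA : MemLp (∑ j, fun ω => ΦA j *ᵥ XA (-lag j) ω) 2 P :=
    memLp_finsetSum' _ fun j _ => (hXA _).mulVec _
  have hSB : MemLp (∑ j, fun ω => ΦB j *ᵥ XB (-lag j) ω) 2 P :=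
    memLp_finsetSum' _ fun j _ => (hXB _).mulVec _
  have h := horth 0 k
  rw [hε_zero, crossMoment_sub ((hXB 0).sub hSA) hSB (hXI k), crossMoment_sub (hXB 0) hSA (hXI k),
    crossMoment_finset_sum _ (fun j _ => (hXA _).mulVec _) (hXI k),
    crossMoment_finset_sum _ (fun j _ => (hXB _).mulVec _) (hXI k)] at h
  simp only [crossMoment_mulVec _ (hXA _) (hXI k), crossMoment_mulVec _ (hXB _) (hXI k),
    crossMoment_eq_of_stationary hγA, crossMoment_eq_of_stationary hγB, sub_zero,
    sub_neg_eq_add] at h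
  rwa [sub_sub, sub_eq_zero] at h

end MeasureTheory

section Summation

variable {ι l m n G R : Type*} [Fintype m] [Ring R] [TopologicalSpace R] [IsTopologicalRing R]

theorem Matrix.hasSum_of_summable_apply {α : Type*} [AddCommMonoid α] [TopologicalSpace α]
    {f : G → Matrix l n α} (hf : ∀ i j, Summable fun k => f k i j) :
    HasSum f (Matrix.of fun i j => ∑' k, f k i j) :=
  Pi.hasSum.2 fun i => Pi.hasSum.2 fun j => (hf i j).hasSum

theorem HasSum.matrix_mul_left {f : G → Matrix m n R} {a : Matrix m n R} (hf : HasSum f a)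
    (A : Matrix l m R) : HasSum (fun k => A * f k) (A * a) :=
  hf.map (addMonoidHomMulLeft A) (continuous_const.matrix_mul continuous_id)

theorem hasSum_sum_mul_comp_add [AddGroup G] (s : Finset ι) (Φ : ι → Matrix l m R) (lag : ι → G)
    {γ : G → Matrix m n R} {a : Matrix m n R} (hγ : HasSum γ a) :
    HasSum (fun k => ∑ j ∈ s, Φ j * γ (k + lag j)) ((∑ j ∈ s, Φ j) * a) := by
  rw [Matrix.sum_mul]
  exact hasSum_sum fun j _ => ((Equiv.addRight (lag j)).hasSum_iff.2 hγ).matrix_mul_left _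

theorem HasSum.eq_of_recursion [AddGroup G] [T2Space R] [Fintype ι] [Fintype l]
    {Φ : ι → Matrix l m R} {Ψ : ι → Matrix l l R} (lag : ι → G) {γ : G → Matrix m n R}
    {δ : G → Matrix l n R} {a : Matrix m n R} {b : Matrix l n R} (hγ : HasSum γ a)
    (hδ : HasSum δ b) (hrec : ∀ k, δ k = ∑ j, Φ j * γ (k + lag j) + ∑ j, Ψ j * δ (k + lag j)) :
    b = (∑ j, Φ j) * a + (∑ j, Ψ j) * b := by
  have h := (hasSum_sum_mul_comp_add Finset.univ Φ lag hγ).add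
    (hasSum_sum_mul_comp_add Finset.univ Ψ lag hδ)
  simp only [← hrec] at h
  exact hδ.unique h

end Summation

theorem Matrix.mul_eq_inv_one_sub_mul_of_eq_add_mul {l m o R : Type*} [Fintype l]
    [DecidableEq l] [Fintype m] [DecidableEq m] [Fintype o] [CommRing R] {B : Matrix l l R}
    {A : Matrix l m R} {CA : Matrix m o R} {CB : Matrix l o R} {G : Matrix o m R}
    (hB : IsUnit (1 - B).det) (h : CB = A * CA + B * CB) (hG : CA * G = 1) :
    CB * G = (1 - B)⁻¹ * A := by
  have h' : (1 - B) * CB = A * CA := by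
    rw [Matrix.sub_mul, Matrix.one_mul, sub_eq_iff_eq_add]
    exact h
  calc CB * G = (1 - B)⁻¹ * ((1 - B) * CB) * G := by rw [nonsing_inv_mul_cancel_left _ _ hB]
    _ = (1 - B)⁻¹ * A * (CA * G) := by rw [h', Matrix.mul_assoc, Matrix.mul_assoc, Matrix.mul_assoc]
    _ = (1 - B)⁻¹ * A := by rw [hG, Matrix.mul_one]

theorem general_time_series_instrumental_identification_general
    {dI dA dB p : ℕ}
    {Ω : Type*} [MeasurableSpace Ω] (P : Measure Ω)
    (XI : ℤ → Ω → (Fin dI → ℝ)) (XA : ℤ → Ω → (Fin dA → ℝ))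
    (XB : ℤ → Ω → (Fin dB → ℝ))
    (hXIL2 : ∀ t i, MemLp (fun ω => XI t ω i) 2 P)
    (hXAL2 : ∀ t i, MemLp (fun ω => XA t ω i) 2 P)
    (hXBL2 : ∀ t i, MemLp (fun ω => XB t ω i) 2 P)
    (ΦBA : Fin p → Matrix (Fin dB) (Fin dA) ℝ)
    (ΦBB : Fin p → Matrix (Fin dB) (Fin dB) ℝ)
    (ε : ℤ → Ω → (Fin dB → ℝ))
    (hε : ∀ t ω, ε t ω =
      XB t ω - (∑ j : Fin p, (ΦBA j).mulVec (XA (t - ((j : ℕ) + 1)) ω)) -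
        ∑ j : Fin p, (ΦBB j).mulVec (XB (t - ((j : ℕ) + 1)) ω))
    (horth : ∀ t s : ℤ, ∀ (i : Fin dB) (l : Fin dI),
      ∫ ω, ε t ω i * XI s ω l ∂P = 0)
    (γAI : ℤ → Matrix (Fin dA) (Fin dI) ℝ)
    (γBI : ℤ → Matrix (Fin dB) (Fin dI) ℝ)
    (hγAI : ∀ t k : ℤ, ∀ (i : Fin dA) (j : Fin dI),
      ∫ ω, XA t ω i * XI (t + k) ω j ∂P = γAI k i j)
    (hγBI : ∀ t k : ℤ, ∀ (i : Fin dB) (j : Fin dI),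
      ∫ ω, XB t ω i * XI (t + k) ω j ∂P = γBI k i j)
    (hsumAI : ∀ (i : Fin dA) (j : Fin dI), Summable fun k : ℤ => γAI k i j)
    (hsumBI : ∀ (i : Fin dB) (j : Fin dI), Summable fun k : ℤ => γBI k i j)
    (CAI : Matrix (Fin dA) (Fin dI) ℝ)
    (hCAI : CAI = Matrix.of fun i j => ∑' k : ℤ, γAI k i j)
    (CBI : Matrix (Fin dB) (Fin dI) ℝ)
    (hCBI : CBI = Matrix.of fun i j => ∑' k : ℤ, γBI k i j)
    (hBB : IsUnit (1 - ∑ j, ΦBB j).det)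
    (G : Matrix (Fin dI) (Fin dA) ℝ)
    (hG : CAI * G = 1) :
    CBI * G = (1 - ∑ j, ΦBB j)⁻¹ * (∑ j, ΦBA j) := by
  have hrec := crossMoment_recursion_of_uncorrelated_residual
    (fun t => memLp_pi_iff.2 (hXAL2 t)) (fun t => memLp_pi_iff.2 (hXBL2 t))
    (fun t => memLp_pi_iff.2 (hXIL2 t)) ΦBA ΦBB (fun j => ((j : ℕ) : ℤ) + 1) hε
    (fun t s => Matrix.ext (horth t s)) (fun t k => Matrix.ext (hγAI t k))
    (fun t k => Matrix.ext (hγBI t k))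
  have hCAI_sum : HasSum γAI CAI := hCAI ▸ Matrix.hasSum_of_summable_apply hsumAI
  have hCBI_sum : HasSum γBI CBI := hCBI ▸ Matrix.hasSum_of_summable_apply hsumBI
  exact Matrix.mul_eq_inv_one_sub_mul_of_eq_add_mul hBB
    (hCAI_sum.eq_of_recursion _ hCBI_sum hrec) hG

/-- Identification theorem for instrumental processes in general stationary time
series: if `X_t^B = ∑_j Φ_{j,BA} X_{t-j}^A + ∑_j Φ_{j,BB} X_{t-j}^B + ε_t` with the
residual `ε` uncorrelated with the instrument process `X^I` at all lags, the
integrated cross-covariances `C_AI, C_BI` exist, `I_{d_B} - Φ_BB` is invertible,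
and `G` is a right inverse of `C_AI`, then `C_BI G = (I_{d_B} - Φ_BB)⁻¹ Φ_BA`. -/
theorem general_time_series_instrumental_identification
    {dI dA dB p : ℕ} (hp : 1 ≤ p)
    {Ω : Type*} [MeasurableSpace Ω] (P : Measure Ω) [IsProbabilityMeasure P]
    (XI : ℤ → Ω → (Fin dI → ℝ)) (XA : ℤ → Ω → (Fin dA → ℝ))
    (XB : ℤ → Ω → (Fin dB → ℝ))
    (hXIL2 : ∀ t i, MemLp (fun ω => XI t ω i) 2 P)
    (hXAL2 : ∀ t i, MemLp (fun ω => XA t ω i) 2 P)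
    (hXBL2 : ∀ t i, MemLp (fun ω => XB t ω i) 2 P)
    (ΦBA : Fin p → Matrix (Fin dB) (Fin dA) ℝ)
    (ΦBB : Fin p → Matrix (Fin dB) (Fin dB) ℝ)
    (ε : ℤ → Ω → (Fin dB → ℝ))
    (hε : ∀ t ω, ε t ω =
      XB t ω - (∑ j : Fin p, (ΦBA j).mulVec (XA (t - ((j : ℕ) + 1)) ω)) -
        ∑ j : Fin p, (ΦBB j).mulVec (XB (t - ((j : ℕ) + 1)) ω))
    (horth : ∀ t s : ℤ, ∀ (i : Fin dB) (l : Fin dI),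
      ∫ ω, ε t ω i * XI s ω l ∂P = 0)
    (γAI : ℤ → Matrix (Fin dA) (Fin dI) ℝ)
    (γBI : ℤ → Matrix (Fin dB) (Fin dI) ℝ)
    (hγAI : ∀ t k : ℤ, ∀ (i : Fin dA) (j : Fin dI),
      ∫ ω, XA t ω i * XI (t + k) ω j ∂P = γAI k i j)
    (hγBI : ∀ t k : ℤ, ∀ (i : Fin dB) (j : Fin dI),
      ∫ ω, XB t ω i * XI (t + k) ω j ∂P = γBI k i j)
    (hsumAI : ∀ (i : Fin dA) (j : Fin dI), Summable fun k : ℤ => γAI k i j)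
    (hsumBI : ∀ (i : Fin dB) (j : Fin dI), Summable fun k : ℤ => γBI k i j)
    (CAI : Matrix (Fin dA) (Fin dI) ℝ)
    (hCAI : CAI = Matrix.of fun i j => ∑' k : ℤ, γAI k i j)
    (CBI : Matrix (Fin dB) (Fin dI) ℝ)
    (hCBI : CBI = Matrix.of fun i j => ∑' k : ℤ, γBI k i j)
    (hBB : IsUnit (1 - ∑ j, ΦBB j).det)
    (G : Matrix (Fin dI) (Fin dA) ℝ)
    (hG : CAI * G = 1) :
    CBI * G = (1 - ∑ j, ΦBB j)⁻¹ * (∑ j, ΦBA j) :=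
  general_time_series_instrumental_identification_general P XI XA XB hXIL2 hXAL2 hXBL2 ΦBA ΦBB ε hε
    horth γAI γBI hγAI hγBI hsumAI hsumBI CAI hCAI CBI hCBI hBB G hG
end
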